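/- arXiv:1012.5457 — 5 statements merged into one kernel-verified Lean document; each statement's English description precedes it below -/
import Mathlib

section
/- Let X be a real-valued random variable whose distribution has a log-concave density f with respect to Lebesgue measure on ℝ. Then for every t > 0, P{ |log f(X) − E[log f(X)]| ≥ t } ≤ 4·e^{−t/2}. -/
/-!
Let `K = ∫ √f`. Log-concavity gives `f ((x + x₀) / 2) ≥ √(f x * f x₀)`, so `{√f ≥ s}` lies in a
dilate by `2` of `{f ≥ s √(f x₀)}`; by the layer-cake formula `√(f x₀) * K ≤ 2 ∫ f = 2` for every
`x₀`. Hence `Z = log (2 / K) - log f(X) / 2` is almost surely nonnegative and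
`E[exp Z] = (2 / K) ∫ f / √f = 2`. A nonnegative `Z` with `E[exp Z] ≤ 2` has `0 ≤ E Z ≤ 1`, so for
`s > 1` a deviation `|Z - E Z| ≥ s` forces `Z ≥ s`, of probability at most `2 exp (-s)` by
Chernoff's bound, while for `s ≤ 1` the bound `4 exp (-s)` exceeds `1`. Take `s = t / 2`.
-/
open MeasureTheory ProbabilityTheory Real Set
open scoped ENNReal

def IsLogConcave (f : ℝ → ℝ) : Prop :=
  ∀ x y : ℝ, ∀ l : ℝ, 0 ≤ l → l ≤ 1 → f x ^ l * f y ^ (1 - l) ≤ f (l * x + (1 - l) * y)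

namespace IsLogConcave

variable {f : ℝ → ℝ}

theorem sqrt_mul_le_midpoint (hlc : IsLogConcave f) {x y : ℝ} (hx : 0 ≤ f x) (hy : 0 ≤ f y) :
    √(f x * f y) ≤ f ((x + y) / 2) := by
  have h := hlc x y 2⁻¹ (by norm_num) (by norm_num)
  rw [show (1 : ℝ) - 2⁻¹ = 2⁻¹ by norm_num, ← Real.mul_rpow hx hy, inv_eq_one_div,
    ← Real.sqrt_eq_rpow] at h
  convert h using 2; ring

theorem volume_le_sqrt_le_two_mul_volume (hlc : IsLogConcave f) (hf0 : ∀ x, 0 ≤ f x) (x₀ s : ℝ) :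
    volume {x | s ≤ √(f x)} ≤ 2 * volume {x | s * √(f x₀) ≤ f x} := by
  have hsub : {x | s ≤ √(f x)} ⊆ (fun x => 2⁻¹ * (x + x₀)) ⁻¹' {x | s * √(f x₀) ≤ f x} := by
    intro x (hx : s ≤ √(f x))
    calc s * √(f x₀) ≤ √(f x) * √(f x₀) := mul_le_mul_of_nonneg_right hx (Real.sqrt_nonneg _)
      _ = √(f x * f x₀) := (Real.sqrt_mul (hf0 x) _).symm
      _ ≤ f ((x + x₀) / 2) := hlc.sqrt_mul_le_midpoint (hf0 x) (hf0 x₀)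
      _ = f (2⁻¹ * (x + x₀)) := by ring_nf
  calc volume {x | s ≤ √(f x)}
      ≤ volume ((fun x => 2⁻¹ * (x + x₀)) ⁻¹' {x | s * √(f x₀) ≤ f x}) := measure_mono hsub
    _ = 2 * volume {x | s * √(f x₀) ≤ f x} := by
      rw [show (fun x : ℝ => 2⁻¹ * (x + x₀)) = (2⁻¹ * ·) ∘ (· + x₀) from rfl, preimage_comp,
        measure_preimage_add_right, Real.volume_preimage_mul_left (by norm_num)]
      norm_num

theorem ofReal_sqrt_mul_lintegral_sqrt_le (hlc : IsLogConcave f) (hf0 : ∀ x, 0 ≤ f x)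
    (hfm : Measurable f) (x₀ : ℝ) :
    ENNReal.ofReal √(f x₀) * ∫⁻ x, ENNReal.ofReal √(f x) ≤ 2 * ∫⁻ x, ENNReal.ofReal (f x) := by
  set a := √(f x₀)
  rcases (Real.sqrt_nonneg (f x₀)).eq_or_lt with ha | ha
  · simp [a, ← ha]
  have hlevel : ∀ s, {x | s * a ≤ f x} = {x | s ≤ f x / a} := fun s => by
    ext x; exact (le_div_iff₀ ha).symm
  have hscale :
      ∫⁻ x, ENNReal.ofReal (f x / a) = ENNReal.ofReal a⁻¹ * ∫⁻ x, ENNReal.ofReal (f x) := by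
    rw [← lintegral_const_mul _ hfm.ennreal_ofReal]
    congr 1 with x
    rw [div_eq_inv_mul, ENNReal.ofReal_mul (inv_nonneg.2 ha.le)]
  have hsqrt :
      ∫⁻ x, ENNReal.ofReal √(f x) ≤ 2 * (ENNReal.ofReal a⁻¹ * ∫⁻ x, ENNReal.ofReal (f x)) :=
    calc ∫⁻ x, ENNReal.ofReal √(f x) = ∫⁻ s in Ioi 0, volume {x | s ≤ √(f x)} :=
          lintegral_eq_lintegral_meas_le _ (.of_forall fun _ => Real.sqrt_nonneg _)
            (by fun_prop)
      _ ≤ ∫⁻ s in Ioi 0, 2 * volume {x | s ≤ f x / a} :=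
          lintegral_mono fun s =>
            (hlc.volume_le_sqrt_le_two_mul_volume hf0 x₀ s).trans_eq (by rw [hlevel])
      _ = 2 * ∫⁻ x, ENNReal.ofReal (f x / a) := by
          rw [lintegral_const_mul' _ _ (by norm_num), lintegral_eq_lintegral_meas_le _
            (.of_forall fun x => div_nonneg (hf0 x) ha.le) (by fun_prop)]
      _ = _ := by rw [hscale]
  calc ENNReal.ofReal a * ∫⁻ x, ENNReal.ofReal √(f x)
      ≤ ENNReal.ofReal a * (2 * (ENNReal.ofReal a⁻¹ * ∫⁻ x, ENNReal.ofReal (f x))) := by gcongr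
    _ = 2 * (ENNReal.ofReal (a * a⁻¹) * ∫⁻ x, ENNReal.ofReal (f x)) := by
      rw [ENNReal.ofReal_mul ha.le]; ring
    _ = _ := by rw [mul_inv_cancel₀ ha.ne', ENNReal.ofReal_one, one_mul]

theorem exists_lintegral_sqrt_eq_ofReal_and_sqrt_mul_le_two (hlc : IsLogConcave f)
    (hf0 : ∀ x, 0 ≤ f x) (hfm : Measurable f) (hint : ∫⁻ x, ENNReal.ofReal (f x) = 1) :
    ∃ K : ℝ, 0 < K ∧ ∫⁻ x, ENNReal.ofReal √(f x) = ENNReal.ofReal K ∧ ∀ x, √(f x) * K ≤ 2 := by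
  set I := ∫⁻ x, ENNReal.ofReal √(f x)
  have hbound : ∀ x, ENNReal.ofReal √(f x) * I ≤ 2 := fun x => by
    simpa [hint] using hlc.ofReal_sqrt_mul_lintegral_sqrt_le hf0 hfm x
  have hI0 : I ≠ 0 := by
    intro hI
    have hzero : (fun x => ENNReal.ofReal (f x)) =ᵐ[volume] 0 := by
      filter_upwards [(lintegral_eq_zero_iff (by fun_prop)).1 hI] with x hx
      simpa [← not_lt, Real.sqrt_pos] using hx
    simp [lintegral_congr_ae hzero] at hint
  have hItop : I ≠ ∞ := by
    obtain ⟨x₀, hx₀⟩ : ∃ x₀, 0 < f x₀ := by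
      by_contra! hle
      simp [ENNReal.ofReal_eq_zero.2 (hle _)] at hint
    intro hI
    have := hbound x₀
    simp [hI, ENNReal.mul_top, hx₀] at this
  refine ⟨I.toReal, ENNReal.toReal_pos hI0 hItop, (ENNReal.ofReal_toReal hItop).symm, fun x => ?_⟩
  rw [← ENNReal.ofReal_le_ofReal_iff zero_le_two, ENNReal.ofReal_mul (Real.sqrt_nonneg _),
    ENNReal.ofReal_toReal hItop]
  simpa using hbound x

end IsLogConcave

section ExpMoment

variable {α : Type*} {mα : MeasurableSpace α} {μ : Measure α} {Z : α → ℝ}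

theorem integrable_of_integrable_exp (hZm : AEStronglyMeasurable Z μ) (hZ0 : 0 ≤ᵐ[μ] Z)
    (hexp : Integrable (fun ω => exp (Z ω)) μ) : Integrable Z μ :=
  hexp.mono' hZm <| by
    filter_upwards [hZ0] with ω hω
    rw [Real.norm_of_nonneg hω]
    linarith [add_one_le_exp (Z ω)]

theorem measureReal_le_abs_sub_integral_le_four_mul_exp [IsProbabilityMeasure μ]
    (hZ : Integrable Z μ) (hZ0 : 0 ≤ᵐ[μ] Z) (hexp : Integrable (fun ω => exp (Z ω)) μ)
    (hexp_le : ∫ ω, exp (Z ω) ∂μ ≤ 2) (s : ℝ) :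
    μ.real {ω | s ≤ |Z ω - ∫ ω', Z ω' ∂μ|} ≤ 4 * exp (-s) := by
  rcases le_or_gt s 1 with hs | hs
  · calc μ.real _ ≤ 1 := measureReal_le_one
      _ ≤ 4 * exp (-1) := by
        rw [exp_neg, ← div_eq_mul_inv, le_div_iff₀ (exp_pos 1)]
        linarith [exp_one_lt_d9]
      _ ≤ 4 * exp (-s) := by gcongr
  have hmean_nonneg : 0 ≤ ∫ ω, Z ω ∂μ := integral_nonneg_of_ae hZ0
  have hmean_le_one : ∫ ω, Z ω ∂μ ≤ 1 := by
    have := integral_mono (f := fun ω => Z ω + 1) (hZ.add (integrable_const 1)) hexp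
      fun ω => add_one_le_exp (Z ω)
    rw [integral_add hZ (integrable_const 1), integral_const, probReal_univ, one_smul] at this
    linarith
  have hupper : {ω | s ≤ |Z ω - ∫ ω', Z ω' ∂μ|} ≤ᵐ[μ] {ω | s ≤ Z ω} := by
    filter_upwards [hZ0] with ω hω (hdev : s ≤ |Z ω - ∫ ω', Z ω' ∂μ|)
    change 0 ≤ Z ω at hω
    change s ≤ Z ω
    cases abs_cases (Z ω - ∫ ω', Z ω' ∂μ) <;> linarith
  calc μ.real {ω | s ≤ |Z ω - ∫ ω', Z ω' ∂μ|} ≤ μ.real {ω | s ≤ Z ω} :=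
        ENNReal.toReal_mono (measure_ne_top _ _) (measure_mono_ae hupper)
    _ ≤ exp (-1 * s) * mgf Z μ 1 := measure_ge_le_exp_mul_mgf s zero_le_one (by simpa using hexp)
    _ ≤ exp (-s) * 2 := by
        rw [mgf, neg_one_mul]
        gcongr
        simpa using hexp_le
    _ ≤ 4 * exp (-s) := by linarith [exp_pos (-s)]

theorem measureReal_le_abs_sub_integral_le_four_mul_exp_neg_div_two [IsProbabilityMeasure μ]
    {Y : α → ℝ} {c : ℝ} (hYm : AEMeasurable Y μ) (hYc : ∀ᵐ ω ∂μ, Y ω / 2 ≤ c)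
    (hexp : Integrable (fun ω => exp (c - Y ω / 2)) μ)
    (hexp_le : ∫ ω, exp (c - Y ω / 2) ∂μ ≤ 2) (t : ℝ) :
    μ.real {ω | t ≤ |Y ω - ∫ ω', Y ω' ∂μ|} ≤ 4 * exp (-t / 2) := by
  have hZ : Integrable (fun ω => c - Y ω / 2) μ :=
    integrable_of_integrable_exp (by fun_prop) (hYc.mono fun _ => sub_nonneg.2) hexp
  have hY : Integrable Y μ :=
    (((integrable_const c).sub hZ).const_mul 2).congr
      (.of_forall fun ω => by simp only [Pi.sub_apply]; ring)
  have hmean : ∫ ω, (c - Y ω / 2) ∂μ = c - (∫ ω, Y ω ∂μ) / 2 := by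
    rw [integral_sub (integrable_const c) (hY.div_const 2), integral_const, integral_div,
      probReal_univ, one_smul]
  have hevent : {ω | t ≤ |Y ω - ∫ ω', Y ω' ∂μ|} =
      {ω | t / 2 ≤ |(c - Y ω / 2) - ∫ ω', (c - Y ω' / 2) ∂μ|} := by
    ext ω
    rw [mem_ofPred_eq, mem_ofPred_eq, hmean,
      show c - Y ω / 2 - (c - (∫ ω', Y ω' ∂μ) / 2) = -(Y ω - ∫ ω', Y ω' ∂μ) / 2 by ring,
      abs_div, abs_neg, abs_two, div_le_div_iff_of_pos_right two_pos]
  rw [hevent, neg_div]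
  exact measureReal_le_abs_sub_integral_le_four_mul_exp hZ (hYc.mono fun _ => sub_nonneg.2)
    hexp hexp_le (t / 2)

end ExpMoment

section Density

variable {Ω : Type*} {mΩ : MeasurableSpace Ω} {P : Measure Ω} {X : Ω → ℝ} {f : ℝ → ℝ}

theorem lintegral_ofReal_eq_one_of_map_eq_withDensity [IsProbabilityMeasure P]
    (hXm : Measurable X) (hdens : P.map X = volume.withDensity (fun x => ENNReal.ofReal (f x))) :
    ∫⁻ x, ENNReal.ofReal (f x) = 1 := by
  have hν := (Measure.isProbabilityMeasure_map (μ := P) hXm.aemeasurable).measure_univ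
  rwa [hdens, withDensity_apply _ MeasurableSet.univ, Measure.restrict_univ] at hν

theorem ae_pos_comp_of_map_eq_withDensity (hXm : Measurable X) (hfm : Measurable f)
    (hdens : P.map X = volume.withDensity (fun x => ENNReal.ofReal (f x))) :
    ∀ᵐ ω ∂P, 0 < f (X ω) := by
  have hpos : ∀ᵐ x ∂P.map X, 0 < f x := by
    rw [hdens, ae_withDensity_iff hfm.ennreal_ofReal]
    exact .of_forall fun x hx => ENNReal.ofReal_pos.1 (pos_iff_ne_zero.2 hx)
  exact ae_of_ae_map hXm.aemeasurable hpos

theorem lintegral_ofReal_exp_sub_log_comp_div_two (hXm : Measurable X) (hf0 : ∀ x, 0 ≤ f x)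
    (hfm : Measurable f) (hdens : P.map X = volume.withDensity (fun x => ENNReal.ofReal (f x)))
    (c : ℝ) :
    ∫⁻ ω, ENNReal.ofReal (exp (c - log (f (X ω)) / 2)) ∂P =
      ENNReal.ofReal (exp c) * ∫⁻ x, ENNReal.ofReal √(f x) := by
  rw [← lintegral_map (f := fun x => ENNReal.ofReal (exp (c - log (f x) / 2))) (by fun_prop) hXm,
    hdens, lintegral_withDensity_eq_lintegral_mul _ (by fun_prop) (by fun_prop),
    ← lintegral_const_mul _ (by fun_prop)]
  congr 1 with x
  rw [Pi.mul_apply, ← ENNReal.ofReal_mul (hf0 x), ← ENNReal.ofReal_mul (exp_pos c).le]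
  congr 1
  rcases (hf0 x).eq_or_lt with hx | hx
  · simp [← hx]
  · have hsqrt : exp (log (f x) / 2) = √(f x) := by
      rw [Real.sqrt_eq_rpow, Real.rpow_def_of_pos hx, mul_one_div]
    rw [exp_sub, hsqrt, mul_div_assoc', mul_comm, mul_div_assoc, Real.div_sqrt]

theorem IsLogConcave.exists_integral_exp_sub_log_comp_div_two_le_two [IsProbabilityMeasure P]
    (hlc : IsLogConcave f) (hf0 : ∀ x, 0 ≤ f x) (hfm : Measurable f) (hXm : Measurable X)
    (hdens : P.map X = volume.withDensity (fun x => ENNReal.ofReal (f x))) :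
    ∃ c, (∀ᵐ ω ∂P, log (f (X ω)) / 2 ≤ c) ∧
      Integrable (fun ω => exp (c - log (f (X ω)) / 2)) P ∧
      ∫ ω, exp (c - log (f (X ω)) / 2) ∂P ≤ 2 := by
  obtain ⟨K, hK, hIK, hfK⟩ := hlc.exists_lintegral_sqrt_eq_ofReal_and_sqrt_mul_le_two hf0 hfm
    (lintegral_ofReal_eq_one_of_map_eq_withDensity hXm hdens)
  have hlintegral : ∫⁻ ω, ENNReal.ofReal (exp (log (2 / K) - log (f (X ω)) / 2)) ∂P = 2 := by
    rw [lintegral_ofReal_exp_sub_log_comp_div_two hXm hf0 hfm hdens, hIK,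
      exp_log (div_pos two_pos hK), ← ENNReal.ofReal_mul (div_pos two_pos hK).le,
      div_mul_cancel₀ _ hK.ne', ENNReal.ofReal_ofNat]
  have hexp_meas : Measurable fun ω => exp (log (2 / K) - log (f (X ω)) / 2) := by fun_prop
  have hexp_nonneg : 0 ≤ᵐ[P] fun ω => exp (log (2 / K) - log (f (X ω)) / 2) :=
    .of_forall fun _ => (exp_pos _).le
  refine ⟨log (2 / K), ?_, ?_, ?_⟩
  · filter_upwards [ae_pos_comp_of_map_eq_withDensity hXm hfm hdens] with ω hω
    rw [← Real.log_sqrt hω.le]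
    exact log_le_log (Real.sqrt_pos.2 hω) ((le_div_iff₀ hK).2 (hfK _))
  · exact (lintegral_ofReal_ne_top_iff_integrable hexp_meas.aestronglyMeasurable hexp_nonneg).1
      (by simp [hlintegral])
  · rw [integral_eq_lintegral_of_nonneg_ae hexp_nonneg hexp_meas.aestronglyMeasurable,
      hlintegral, ENNReal.toReal_ofNat]

end Density

theorem one_dim_information_tail_bound_general
    {Ω : Type*} [MeasureSpace Ω] [IsProbabilityMeasure (ℙ : Measure Ω)]
    (X : Ω → ℝ) (hXm : Measurable X)
    (f : ℝ → ℝ) (hf0 : ∀ x, 0 ≤ f x) (hfm : Measurable f)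
    (hdens : Measure.map X ℙ = volume.withDensity (fun x => ENNReal.ofReal (f x)))
    (hlc : ∀ x y : ℝ, ∀ l : ℝ, 0 ≤ l → l ≤ 1 →
      f x ^ l * f y ^ (1 - l) ≤ f (l * x + (1 - l) * y))
    (t : ℝ) :
    (ℙ {ω | t ≤ |Real.log (f (X ω)) - ∫ ω', Real.log (f (X ω'))|}).toReal
      ≤ 4 * Real.exp (-t / 2) := by
  obtain ⟨c, hc, hexp, hexp_le⟩ :=
    IsLogConcave.exists_integral_exp_sub_log_comp_div_two_le_two hlc hf0 hfm hXm hdens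
  exact measureReal_le_abs_sub_integral_le_four_mul_exp_neg_div_two (by fun_prop) hc hexp hexp_le t

theorem one_dim_information_tail_bound
    {Ω : Type*} [MeasureSpace Ω] [IsProbabilityMeasure (ℙ : Measure Ω)]
    (X : Ω → ℝ) (hXm : Measurable X)
    (f : ℝ → ℝ) (hf0 : ∀ x, 0 ≤ f x) (hfm : Measurable f)
    (hdens : Measure.map X ℙ = volume.withDensity (fun x => ENNReal.ofReal (f x)))
    (hlc : ∀ x y : ℝ, ∀ l : ℝ, 0 ≤ l → l ≤ 1 →
      f x ^ l * f y ^ (1 - l) ≤ f (l * x + (1 - l) * y))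
    (t : ℝ) (ht : 0 < t) :
    (ℙ {ω | t ≤ |Real.log (f (X ω)) - ∫ ω', Real.log (f (X ω'))|}).toReal
      ≤ 4 * Real.exp (-t / 2) :=
  one_dim_information_tail_bound_general X hXm f hf0 hfm hdens hlc t
end

section
/- Let η be a positive random variable whose distribution is log-concave (e.g., whose density on (0,∞) with respect to Lebesgue measure is log-concave). Then the normalized moment function p ↦ λ̄_p = E[η^p] / Γ(p+1) is log-concave on [0,∞). Equivalently, for all a ≥ b ≥ c ≥ 0, one has the reverse Lyapunov inequality λ̄_a^{b−c} · λ̄_c^{a−b} ≤ λ̄_b^{a−c}. -/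
/-!
Write `N(p) = ∫₀^∞ t^p g(t) dt / Γ(p + 1)`. For `0 ≤ a < c < b`, pick the exponential
`E(t) = exp (ν - e^μ t)`, whose normalized moments `exp (ν - (p + 1) μ)` are log-affine in `p`, so
that `N` and the normalized moments of `E` agree at `a` and `b`. Since `log g` is concave and
`log E` affine, `{g > E}` is an interval, so `D = g - E` has sign pattern `(-, +, -)` on
`(0, ∞)`. A combination `ψ(t) = t^c - α t^a - β t^b` with the same sign pattern (a chord of the
concave `u ↦ u^((c-a)/(b-a))` in `u = t^(b-a)`) then gives `∫ t^c D = ∫ ψ D ≥ 0`, i.e. `N(c)`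
dominates the log-affine interpolation of `N(a)` and `N(b)`. Log-concave densities have
exponential tails, so all these moments are finite.
-/

open MeasureTheory ProbabilityTheory

open Set Real Filter

section ConcaveLog

variable {F : ℝ → ℝ} {s : Set ℝ}

theorem ConcaveOn.rpow_mul_rpow_le_of_log (hF : ConcaveOn ℝ s fun p => log (F p))
    (hpos : ∀ p ∈ s, 0 < F p) {a b l : ℝ} (ha : a ∈ s) (hb : b ∈ s) (hl0 : 0 ≤ l) (hl1 : l ≤ 1) :
    F a ^ l * F b ^ (1 - l) ≤ F (l * a + (1 - l) * b) := by
  have hmem : l * a + (1 - l) * b ∈ s := hF.1 ha hb hl0 (sub_nonneg.2 hl1) (by ring)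
  have hconc := hF.2 ha hb hl0 (sub_nonneg.2 hl1) (by ring)
  simp only [smul_eq_mul] at hconc
  rw [rpow_def_of_pos (hpos a ha), rpow_def_of_pos (hpos b hb), ← exp_add,
    ← exp_log (hpos _ hmem)]
  exact exp_le_exp.2 (by linarith)

theorem ConcaveOn.rpow_sub_mul_rpow_sub_le_of_log (hF : ConcaveOn ℝ s fun p => log (F p))
    (hpos : ∀ p ∈ s, 0 < F p) {a b c : ℝ} (ha : a ∈ s) (hc : c ∈ s) (hcb : c ≤ b) (hba : b ≤ a) :
    F a ^ (b - c) * F c ^ (a - b) ≤ F b ^ (a - c) := by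
  obtain rfl | hca := (hcb.trans hba).eq_or_lt
  · obtain rfl := le_antisymm hba hcb
    simp
  have hac : 0 < a - c := sub_pos.2 hca
  have hb : (b - c) / (a - c) * a + (a - b) / (a - c) * c = b := by field_simp; ring
  have hw₁ : 0 ≤ (b - c) / (a - c) := div_nonneg (by linarith) hac.le
  have hw₂ : 0 ≤ (a - b) / (a - c) := div_nonneg (by linarith) hac.le
  have hsum : (b - c) / (a - c) + (a - b) / (a - c) = 1 := by field_simp; ring
  have hbs : b ∈ s := hb ▸ hF.1 ha hc hw₁ hw₂ hsum
  have hconc := hF.2 ha hc hw₁ hw₂ hsum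
  simp only [smul_eq_mul, hb] at hconc
  rw [rpow_def_of_pos (hpos a ha), rpow_def_of_pos (hpos c hc), rpow_def_of_pos (hpos b hbs),
    ← exp_add]
  refine exp_le_exp.2 ?_
  have := mul_le_mul_of_nonneg_right hconc hac.le
  field_simp at this
  linarith

end ConcaveLog

theorem ConcaveOn.nonneg_of_mem_Icc {h : ℝ → ℝ} {s : Set ℝ} (hh : ConcaveOn ℝ s h) {x y u : ℝ}
    (hx : x ∈ s) (hy : y ∈ s) (hx0 : h x = 0) (hy0 : h y = 0) (hu : u ∈ Icc x y) : 0 ≤ h u := by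
  simpa [hx0, hy0] using hh.ge_on_segment hx hy (by rwa [segment_eq_Icc (hu.1.trans hu.2)])

theorem ConcaveOn.nonpos_of_notMem_Ioo {h : ℝ → ℝ} {s : Set ℝ} (hh : ConcaveOn ℝ s h)
    {x y u : ℝ} (hx : x ∈ s) (hy : y ∈ s) (hxy : x < y) (hx0 : h x = 0) (hy0 : h y = 0)
    (hu : u ∈ s) (hux : u ∉ Ioo x y) : h u ≤ 0 := by
  rcases not_and_or.1 hux with hxu | huy
  · obtain rfl | hux := (not_lt.1 hxu).eq_or_lt
    · exact hx0.le
    have hx_mem : x ∈ openSegment ℝ u y := by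
      rw [openSegment_eq_Ioo (hux.trans hxy)]; exact ⟨hux, hxy⟩
    simpa [hx0] using hh.left_le_of_le_right hu hy hx_mem (by rw [hx0, hy0])
  · obtain rfl | hyu := (not_lt.1 huy).eq_or_lt
    · exact hy0.le
    have hy_mem : y ∈ openSegment ℝ x u := by
      rw [openSegment_eq_Ioo (hxy.trans hyu)]; exact ⟨hxy, hyu⟩
    simpa [hy0] using hh.right_le_of_le_left hx hu hy_mem (by rw [hx0, hy0])

/- In the variable `u = t ^ (b - a)`, `t ^ c - α * t ^ a - β * t ^ b` is `t ^ a` times the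
concave function `u ^ θ - (α + β * u)`, `θ = (c - a) / (b - a)`; take `α + β * u` to be the chord
of `u ^ θ` over `[m ^ (b - a), M ^ (b - a)]`. -/
theorem exists_rpow_sub_sign_of_Icc {a b c m M : ℝ} (hac : a < c) (hcb : c < b) (hm : 0 ≤ m)
    (hmM : m < M) :
    ∃ α β : ℝ, ∀ t, 0 < t → (t ∈ Icc m M → 0 ≤ t ^ c - α * t ^ a - β * t ^ b) ∧
      (t ∉ Ioo m M → t ^ c - α * t ^ a - β * t ^ b ≤ 0) := by
  have hba : 0 < b - a := by linarith
  have hM : 0 ≤ M := hm.trans hmM.le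
  set θ := (c - a) / (b - a)
  set m' := m ^ (b - a)
  set M' := M ^ (b - a)
  have hm'M' : m' < M' := rpow_lt_rpow hm hmM hba
  set β := (M' ^ θ - m' ^ θ) / (M' - m')
  set α := m' ^ θ - β * m'
  have hβ : 0 ≤ β := div_nonneg (sub_nonneg.2 (rpow_le_rpow (by positivity) hm'M'.le
    (div_nonneg (by linarith) hba.le))) (by linarith)
  set h : ℝ → ℝ := fun u => u ^ θ - (β • id u + α)
  have hconc : ConcaveOn ℝ (Ici 0) h :=
    (concaveOn_rpow (div_nonneg (by linarith) hba.le) ((div_le_one hba).2 (by linarith))).sub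
      (((convexOn_id (convex_Ici 0)).smul hβ).add_const α)
  have hm'0 : h m' = 0 := by simp [h, α]
  have hM'0 : h M' = 0 := by
    simp only [h, smul_eq_mul, id, α, β]; field_simp [(sub_pos.2 hm'M').ne']; ring
  refine ⟨α, β, fun t ht => ?_⟩
  have hψ : t ^ c - α * t ^ a - β * t ^ b = t ^ a * h (t ^ (b - a)) := by
    have hc : t ^ c = t ^ a * t ^ (c - a) := by rw [← rpow_add ht, add_sub_cancel]
    have hb : t ^ b = t ^ a * t ^ (b - a) := by rw [← rpow_add ht, add_sub_cancel]
    simp only [h]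
    rw [← rpow_mul ht.le, mul_div_cancel₀ _ hba.ne', smul_eq_mul, id, hc, hb]
    ring
  rw [hψ]
  refine ⟨fun htI => mul_nonneg (rpow_nonneg ht.le _) ?_,
    fun htI => mul_nonpos_of_nonneg_of_nonpos (rpow_nonneg ht.le _) ?_⟩
  · exact hconc.nonneg_of_mem_Icc (rpow_nonneg hm _) (rpow_nonneg hM _) hm'0 hM'0
      ⟨rpow_le_rpow hm htI.1 hba.le, rpow_le_rpow ht.le htI.2 hba.le⟩
  · refine hconc.nonpos_of_notMem_Ioo (rpow_nonneg hm _) (rpow_nonneg hM _) hm'M' hm'0 hM'0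
      (rpow_nonneg ht.le _) fun ⟨h1, h2⟩ => htI ⟨?_, ?_⟩
    · exact (rpow_lt_rpow_iff hm ht.le hba).1 h1
    · exact (rpow_lt_rpow_iff ht.le hM hba).1 h2

theorem Set.OrdConnected.exists_rpow_sub_sign {U : Set ℝ} (hU : U.OrdConnected)
    (hU0 : U ⊆ Ioi 0) (hUn : U.Nontrivial) {a b c : ℝ} (hac : a < c) (hcb : c < b) :
    ∃ α β : ℝ, ∀ t, 0 < t → (t ∈ U → 0 ≤ t ^ c - α * t ^ a - β * t ^ b) ∧
      (t ∉ U → t ^ c - α * t ^ a - β * t ^ b ≤ 0) := by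
  have hbdd : BddBelow U := ⟨0, fun u hu => (hU0 hu).le⟩
  have hm : 0 ≤ sInf U := le_csInf hUn.nonempty fun u hu => (hU0 hu).le
  by_cases hbdd' : BddAbove U
  · obtain ⟨x, hx, y, hy, hxy⟩ := hUn.exists_lt
    have hmM : sInf U < sSup U := (csInf_le hbdd hx).trans_lt (hxy.trans_le (le_csSup hbdd' hy))
    obtain ⟨α, β, hαβ⟩ := exists_rpow_sub_sign_of_Icc hac hcb hm hmM
    refine ⟨α, β, fun t ht => ⟨fun htU => (hαβ t ht).1 (subset_Icc_csInf_csSup hbdd hbdd' htU),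
      fun htU => (hαβ t ht).2 fun htI => htU ?_⟩⟩
    exact IsConnected.Ioo_csInf_csSup_subset ⟨hUn.nonempty, hU.isPreconnected⟩ hbdd hbdd' htI
  · refine ⟨sInf U ^ (c - a), 0, fun t ht => ?_⟩
    have hψ : t ^ c - sInf U ^ (c - a) * t ^ a - 0 * t ^ b =
        t ^ a * (t ^ (c - a) - sInf U ^ (c - a)) := by
      rw [mul_sub, ← rpow_add ht, add_sub_cancel]; ring
    rw [hψ]
    constructor
    · intro htU
      exact mul_nonneg (rpow_nonneg ht.le _)
        (sub_nonneg.2 (rpow_le_rpow hm (csInf_le hbdd htU) (by linarith)))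
    · intro htU
      have hts : t ≤ sInf U :=
        not_lt.1 fun h => htU (hU.isPreconnected.Ioi_csInf_subset hbdd hbdd' h)
      exact mul_nonpos_of_nonneg_of_nonpos (rpow_nonneg ht.le _)
        (sub_nonpos.2 (rpow_le_rpow ht.le hts (by linarith)))

theorem rpow_le_rpow_add_rpow {t a b c : ℝ} (ht : 0 < t) (hac : a ≤ c) (hcb : c ≤ b) :
    t ^ c ≤ t ^ a + t ^ b := by
  rcases le_total t 1 with h1 | h1
  · linarith [rpow_le_rpow_of_exponent_ge ht h1 hac, rpow_nonneg ht.le b]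
  · linarith [rpow_le_rpow_of_exponent_le h1 hcb, rpow_nonneg ht.le a]

theorem exists_ae_nonneg_rpow_sub_mul {D : ℝ → ℝ} (hD : {t | 0 < t ∧ 0 < D t}.OrdConnected)
    {a b c : ℝ} (hac : a < c) (hcb : c < b) :
    ∃ α β : ℝ, ∀ᵐ t ∂volume.restrict (Ioi 0), 0 ≤ (t ^ c - α * t ^ a - β * t ^ b) * D t := by
  rcases {t | 0 < t ∧ 0 < D t}.subsingleton_or_nontrivial with hU | hU
  -- a subsingleton is null, so `D ≤ 0` a.e. and any `ψ ≤ 0` will do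
  · refine ⟨1, 1, (ae_restrict_iff' measurableSet_Ioi).2 ?_⟩
    filter_upwards [measure_eq_zero_iff_ae_notMem.1 (hU.measure_zero volume)] with t htU ht
    refine mul_nonneg_of_nonpos_of_nonpos ?_ (not_lt.1 fun h => htU ⟨ht, h⟩)
    linarith [rpow_le_rpow_add_rpow ht hac.le hcb.le]
  · obtain ⟨α, β, h⟩ := hD.exists_rpow_sub_sign (fun t ht => ht.1) hU hac hcb
    refine ⟨α, β, (ae_restrict_iff' measurableSet_Ioi).2 (Eventually.of_forall fun t ht => ?_)⟩
    by_cases hDt : 0 < D t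
    · exact mul_nonneg ((h t ht).1 ⟨ht, hDt⟩) hDt.le
    · exact mul_nonneg_of_nonpos_of_nonpos ((h t ht).2 fun htU => hDt htU.2) (not_lt.1 hDt)

theorem setIntegral_rpow_mul_nonneg_of_ordConnected {D : ℝ → ℝ}
    (hD : {t | 0 < t ∧ 0 < D t}.OrdConnected) {a b c : ℝ} (hac : a < c) (hcb : c < b)
    (hia : IntegrableOn (fun t => t ^ a * D t) (Ioi 0))
    (hib : IntegrableOn (fun t => t ^ b * D t) (Ioi 0))
    (hic : IntegrableOn (fun t => t ^ c * D t) (Ioi 0))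
    (ha : ∫ t in Ioi 0, t ^ a * D t = 0) (hb : ∫ t in Ioi 0, t ^ b * D t = 0) :
    0 ≤ ∫ t in Ioi 0, t ^ c * D t := by
  obtain ⟨α, β, hψ⟩ := exists_ae_nonneg_rpow_sub_mul hD hac hcb
  have hsplit : ∫ t in Ioi 0, (t ^ c - α * t ^ a - β * t ^ b) * D t =
      (∫ t in Ioi 0, t ^ c * D t) - α * (∫ t in Ioi 0, t ^ a * D t) -
        β * ∫ t in Ioi 0, t ^ b * D t := by
    simp only [sub_mul, mul_assoc]
    have hca : IntegrableOn (fun t => t ^ c * D t - α * (t ^ a * D t)) (Ioi 0) :=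
      hic.sub (hia.const_mul α)
    rw [integral_sub hca (hib.const_mul β), integral_sub hic (hia.const_mul α),
      integral_const_mul, integral_const_mul]
  simpa [hsplit, ha, hb] using integral_nonneg_of_ae hψ

theorem MeasureTheory.IntegrableOn.exists_gt_lt {g : ℝ → ℝ} {x₀ c : ℝ}
    (hg : IntegrableOn g (Ioi x₀)) (hc : 0 < c) : ∃ x, x₀ < x ∧ g x < c := by
  by_contra! h
  have hconst : IntegrableOn (fun _ => c) (Ioi x₀) :=
    hg.mono' aestronglyMeasurable_const ((ae_restrict_iff' measurableSet_Ioi).2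
      (Eventually.of_forall fun x hx => by rw [Real.norm_of_nonneg hc.le]; exact h x hx))
  simp [integrableOn_const_iff, hc.ne'] at hconst

theorem integrableOn_rpow_mul_exp_sub_mul (ν : ℝ) {κ p : ℝ} (hκ : 0 < κ) (hp : -1 < p) :
    IntegrableOn (fun t => t ^ p * exp (ν - κ * t)) (Ioi 0) := by
  have h : IntegrableOn (fun t => exp ν * (t ^ p * exp (-κ * t ^ (1 : ℝ)))) (Ioi 0) :=
    (integrableOn_rpow_mul_exp_neg_mul_rpow hp one_pos hκ).const_mul _
  refine h.congr_fun (fun t _ => ?_) measurableSet_Ioi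
  simp only [rpow_one, sub_eq_add_neg, exp_add, neg_mul]
  ring

theorem integral_rpow_mul_exp_sub_mul (ν μ : ℝ) {p : ℝ} (hp : -1 < p) :
    ∫ t in Ioi 0, t ^ p * exp (ν - exp μ * t) = Gamma (p + 1) * exp (ν - (p + 1) * μ) := by
  have h := integral_rpow_mul_exp_neg_mul_Ioi (a := p + 1) (by linarith) (exp_pos μ)
  rw [add_sub_cancel_right, one_div, ← exp_neg, ← exp_mul] at h
  simp_rw [sub_eq_add_neg ν, exp_add, mul_left_comm _ (exp ν)]
  rw [integral_const_mul, h, show -μ * (p + 1) = -((p + 1) * μ) by ring]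
  ring

theorem integrableOn_rpow_mul_of_le_exp {g : ℝ → ℝ} (hg0 : ∀ x, 0 ≤ g x)
    (hint : IntegrableOn g (Ioi 0)) {x₁ ν ε p : ℝ} (hx₁ : 0 < x₁) (hε : 0 < ε)
    (htail : ∀ t, x₁ < t → g t ≤ exp (ν - ε * t)) (hp : 0 ≤ p) :
    IntegrableOn (fun t => t ^ p * g t) (Ioi 0) := by
  have hmeas : AEStronglyMeasurable (fun t => t ^ p * g t) (volume.restrict (Ioi 0)) :=
    (measurable_id.pow_const p).aestronglyMeasurable.mul hint.aestronglyMeasurable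
  rw [← Ioc_union_Ioi_eq_Ioi hx₁.le]
  refine IntegrableOn.union ?_ ?_
  · refine ((hint.mono_set Ioc_subset_Ioi_self).const_mul (x₁ ^ p)).mono'
      (hmeas.mono_set Ioc_subset_Ioi_self)
      ((ae_restrict_iff' measurableSet_Ioc).2 (Eventually.of_forall fun t ht => ?_))
    rw [norm_mul, norm_of_nonneg (rpow_nonneg ht.1.le _), norm_of_nonneg (hg0 t)]
    exact mul_le_mul_of_nonneg_right (rpow_le_rpow ht.1.le ht.2 hp) (hg0 t)
  · refine ((integrableOn_rpow_mul_exp_sub_mul ν hε (by linarith)).mono_set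
      (Ioi_subset_Ioi hx₁.le)).mono' (hmeas.mono_set (Ioi_subset_Ioi hx₁.le))
      ((ae_restrict_iff' measurableSet_Ioi).2 (Eventually.of_forall fun t ht => ?_))
    have ht0 : 0 < t := hx₁.trans ht
    rw [norm_mul, norm_of_nonneg (rpow_nonneg ht0.le _), norm_of_nonneg (hg0 t)]
    exact mul_le_mul_of_nonneg_left (htail t ht) (rpow_nonneg ht0.le _)

theorem setIntegral_rpow_mul_pos {g : ℝ → ℝ} (hg0 : ∀ x, 0 ≤ g x) {p : ℝ}
    (hint : IntegrableOn g (Ioi 0)) (hpint : IntegrableOn (fun t => t ^ p * g t) (Ioi 0))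
    (hmass : 0 < ∫ t in Ioi 0, g t) : 0 < ∫ t in Ioi 0, t ^ p * g t := by
  have hsupp : Function.support (fun t => t ^ p * g t) ∩ Ioi 0 = Function.support g ∩ Ioi 0 := by
    ext t
    simp only [mem_inter_iff, Function.mem_support, mem_Ioi]
    exact ⟨fun h => ⟨right_ne_zero_of_mul h.1, h.2⟩,
      fun h => ⟨mul_ne_zero (rpow_pos_of_pos h.2 p).ne' h.1, h.2⟩⟩
  rw [setIntegral_pos_iff_support_of_nonneg_ae (Eventually.of_forall hg0) hint] at hmass
  rw [setIntegral_pos_iff_support_of_nonneg_ae ((ae_restrict_iff' measurableSet_Ioi).2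
    (Eventually.of_forall fun t ht => mul_nonneg (rpow_nonneg (le_of_lt ht) p) (hg0 t))) hpint,
    hsupp]
  exact hmass

noncomputable def normalizedMoment (g : ℝ → ℝ) (p : ℝ) : ℝ :=
  (∫ t in Ioi 0, t ^ p * g t) / Gamma (p + 1)

theorem normalizedMoment_pos {g : ℝ → ℝ} (hg0 : ∀ x, 0 ≤ g x) {p : ℝ} (hp : 0 ≤ p)
    (hint : IntegrableOn g (Ioi 0)) (hpint : IntegrableOn (fun t => t ^ p * g t) (Ioi 0))
    (hmass : 0 < ∫ t in Ioi 0, g t) : 0 < normalizedMoment g p :=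
  div_pos (setIntegral_rpow_mul_pos hg0 hint hpint hmass) (Gamma_pos_of_pos (by linarith))

def LogConcaveOnPos (g : ℝ → ℝ) : Prop :=
  ∀ x y : ℝ, 0 < x → 0 < y → ∀ l : ℝ, 0 ≤ l → l ≤ 1 →
    g x ^ l * g y ^ (1 - l) ≤ g (l * x + (1 - l) * y)

namespace LogConcaveOnPos

variable {g : ℝ → ℝ}

theorem ordConnected_setOf_exp_lt (hg : LogConcaveOnPos g) (ν κ : ℝ) :
    {t | 0 < t ∧ 0 < g t - exp (ν - κ * t)}.OrdConnected := by
  refine ordConnected_of_Ioo fun t₁ h₁ t₂ h₂ h12 t ht => ⟨h₁.1.trans ht.1, ?_⟩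
  set s := (t₂ - t) / (t₂ - t₁) with hs
  have h21 : 0 < t₂ - t₁ := sub_pos.2 h12
  have hs0 : 0 < s := div_pos (by linarith [ht.2]) h21
  have hs1 : 0 < 1 - s := by
    rw [sub_pos, div_lt_one h21]; linarith [ht.1]
  have hcomb : s * t₁ + (1 - s) * t₂ = t := by rw [hs]; field_simp; ring
  have hexp : exp (ν - κ * t₁) ^ s * exp (ν - κ * t₂) ^ (1 - s) = exp (ν - κ * t) := by
    rw [← exp_mul, ← exp_mul, ← exp_add, ← hcomb]; ring_nf
  have hlt : exp (ν - κ * t₁) ^ s * exp (ν - κ * t₂) ^ (1 - s) < g t₁ ^ s * g t₂ ^ (1 - s) :=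
    mul_lt_mul'' (rpow_lt_rpow (exp_pos _).le (sub_pos.1 h₁.2) hs0)
      (rpow_lt_rpow (exp_pos _).le (sub_pos.1 h₂.2) hs1) (by positivity) (by positivity)
  have hle := hcomb ▸ hg t₁ t₂ h₁.1 h₂.1 s hs0.le (sub_nonneg.1 hs1.le)
  linarith

theorem le_exp_of_le_half (hg : LogConcaveOnPos g) (hg0 : ∀ x, 0 ≤ g x) {x₀ x₁ t : ℝ}
    (hx₀ : 0 < x₀) (h01 : x₀ < x₁) (hgx₀ : 0 < g x₀) (hgx₁ : g x₁ ≤ g x₀ / 2) (ht : x₁ < t) :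
    g t ≤ exp (log (g x₀) - log 2 / (x₁ - x₀) * (t - x₀)) := by
  rcases (hg0 t).eq_or_lt with hgt | hgt
  · rw [← hgt]; positivity
  set l := (t - x₁) / (t - x₀) with hl
  have htx₀ : 0 < t - x₀ := by linarith
  have hx : 0 < x₁ - x₀ := by linarith
  have hl0 : 0 ≤ l := div_nonneg (by linarith) htx₀.le
  have h1l : 1 - l = (x₁ - x₀) / (t - x₀) := by rw [hl]; field_simp; ring
  have hcomb : l * x₀ + (1 - l) * t = x₁ := by rw [hl]; field_simp; ring
  have hlc := hcomb ▸ hg x₀ t hx₀ (by linarith) l hl0 (by rw [← sub_nonneg, h1l]; positivity)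
  have hlog := log_le_log (by positivity) (hlc.trans hgx₁)
  rw [log_mul (by positivity) (by positivity), log_rpow hgx₀, log_rpow hgt,
    log_div hgx₀.ne' two_ne_zero] at hlog
  have hdiff : (x₁ - x₀) / (t - x₀) * (log (g t) - log (g x₀)) ≤ -log 2 := by
    rw [← h1l]; linarith
  rw [div_mul_eq_mul_div, div_le_iff₀ htx₀] at hdiff
  have hquot : log 2 / (x₁ - x₀) * (t - x₀) ≤ log (g x₀) - log (g t) := by
    rw [div_mul_eq_mul_div, div_le_iff₀ hx]; linarith
  rw [← exp_log hgt, exp_le_exp]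
  linarith

theorem exists_le_exp_sub_mul (hg : LogConcaveOnPos g) (hg0 : ∀ x, 0 ≤ g x)
    (hint : IntegrableOn g (Ioi 0)) :
    ∃ x₁ ν ε : ℝ, 0 < x₁ ∧ 0 < ε ∧ ∀ t, x₁ < t → g t ≤ exp (ν - ε * t) := by
  by_cases hpos : ∃ x₀, 0 < x₀ ∧ 0 < g x₀
  · obtain ⟨x₀, hx₀, hgx₀⟩ := hpos
    obtain ⟨x₁, h01, hgx₁⟩ :=
      (hint.mono_set (Ioi_subset_Ioi hx₀.le)).exists_gt_lt (half_pos hgx₀)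
    refine ⟨x₁, log (g x₀) + log 2 / (x₁ - x₀) * x₀, log 2 / (x₁ - x₀), hx₀.trans h01,
      div_pos (log_pos one_lt_two) (sub_pos.2 h01), fun t ht => ?_⟩
    convert hg.le_exp_of_le_half hg0 hx₀ h01 hgx₀ hgx₁.le ht using 2
    ring
  · push Not at hpos
    exact ⟨1, 0, 1, one_pos, one_pos, fun t ht => (hpos t (one_pos.trans ht)).trans (exp_pos _).le⟩

theorem integrableOn_rpow_mul (hg : LogConcaveOnPos g)
    (hg0 : ∀ x, 0 ≤ g x) (hint : IntegrableOn g (Ioi 0)) {p : ℝ} (hp : 0 ≤ p) :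
    IntegrableOn (fun t => t ^ p * g t) (Ioi 0) := by
  obtain ⟨x₁, ν, ε, hx₁, hε, htail⟩ := hg.exists_le_exp_sub_mul hg0 hint
  exact integrableOn_rpow_mul_of_le_exp hg0 hint hx₁ hε htail hp

theorem exp_le_normalizedMoment (hg : LogConcaveOnPos g)
    (hint : ∀ p : ℝ, 0 ≤ p → IntegrableOn (fun t => t ^ p * g t) (Ioi 0)) {ν μ a b c : ℝ}
    (ha : 0 ≤ a) (hac : a < c) (hcb : c < b)
    (hEa : normalizedMoment g a = exp (ν - (a + 1) * μ))
    (hEb : normalizedMoment g b = exp (ν - (b + 1) * μ)) :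
    exp (ν - (c + 1) * μ) ≤ normalizedMoment g c := by
  set D := fun t => g t - exp (ν - exp μ * t)
  have hEint : ∀ p : ℝ, 0 ≤ p → IntegrableOn (fun t => t ^ p * exp (ν - exp μ * t)) (Ioi 0) :=
    fun p hp => integrableOn_rpow_mul_exp_sub_mul ν (exp_pos μ) (by linarith)
  have hDint : ∀ p : ℝ, 0 ≤ p → IntegrableOn (fun t => t ^ p * D t) (Ioi 0) := fun p hp =>
    ((hint p hp).sub (hEint p hp)).congr_fun (fun t _ => by simp only [D, Pi.sub_apply]; ring)
      measurableSet_Ioi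
  have hDmom : ∀ p : ℝ, 0 ≤ p → ∫ t in Ioi 0, t ^ p * D t =
      Gamma (p + 1) * (normalizedMoment g p - exp (ν - (p + 1) * μ)) := by
    intro p hp
    simp only [D, mul_sub]
    rw [integral_sub (hint p hp) (hEint p hp), integral_rpow_mul_exp_sub_mul ν μ (by linarith),
      normalizedMoment, mul_div_cancel₀ _ (Gamma_pos_of_pos (by linarith)).ne']
  have hc := setIntegral_rpow_mul_nonneg_of_ordConnected (hg.ordConnected_setOf_exp_lt ν (exp μ))
    hac hcb (hDint a ha) (hDint b (by linarith)) (hDint c (by linarith))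
    (by rw [hDmom a ha, hEa, sub_self, mul_zero])
    (by rw [hDmom b (by linarith), hEb, sub_self, mul_zero])
  rw [hDmom c (by linarith), mul_nonneg_iff_of_pos_left (Gamma_pos_of_pos (by linarith))] at hc
  exact sub_nonneg.1 hc

theorem concaveOn_log_normalizedMoment (hg : LogConcaveOnPos g)
    (hint : ∀ p : ℝ, 0 ≤ p → IntegrableOn (fun t => t ^ p * g t) (Ioi 0))
    (hpos : ∀ p ∈ Ici (0 : ℝ), 0 < normalizedMoment g p) :
    ConcaveOn ℝ (Ici 0) fun p => log (normalizedMoment g p) := by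
  suffices key : ∀ a b l : ℝ, 0 ≤ a → a < b → 0 < l → l < 1 →
      l * log (normalizedMoment g a) + (1 - l) * log (normalizedMoment g b) ≤
        log (normalizedMoment g (l * a + (1 - l) * b)) by
    refine concaveOn_iff_pairwise_pos.2 ⟨convex_Ici 0, fun x hx y hy hxy wx wy hwx hwy hsum => ?_⟩
    obtain rfl : wy = 1 - wx := by linarith
    simp only [smul_eq_mul]
    rcases hxy.lt_or_gt with h | h
    · exact key x y wx hx h hwx (by linarith)
    · have := key y x (1 - wx) hy h hwy (by linarith)
      rw [sub_sub_cancel, show (1 - wx) * y + wx * x = wx * x + (1 - wx) * y by ring] at this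
      linarith
  intro a b l ha hab hl0 hl1
  set A := log (normalizedMoment g a)
  set B := log (normalizedMoment g b)
  set μ := (A - B) / (b - a)
  have hba : b - a ≠ 0 := (sub_pos.2 hab).ne'
  have hEa : normalizedMoment g a = exp (A + (a + 1) * μ - (a + 1) * μ) := by
    rw [add_sub_cancel_right, exp_log (hpos a ha)]
  have hEb : normalizedMoment g b = exp (A + (a + 1) * μ - (b + 1) * μ) := by
    rw [show A + (a + 1) * μ - (b + 1) * μ = B by simp only [μ]; field_simp; ring,
      exp_log (hpos b (ha.trans hab.le))]
  have hac : a < l * a + (1 - l) * b := by nlinarith [mul_pos (sub_pos.2 hl1) (sub_pos.2 hab)]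
  have hcb : l * a + (1 - l) * b < b := by nlinarith [mul_pos hl0 (sub_pos.2 hab)]
  have hc := hg.exp_le_normalizedMoment hint ha hac hcb hEa hEb
  rw [← le_log_iff_exp_le (hpos _ (ha.trans hac.le))] at hc
  calc l * A + (1 - l) * B = A + (a + 1) * μ - (l * a + (1 - l) * b + 1) * μ := by
        simp only [μ]; field_simp; ring
    _ ≤ _ := hc

end LogConcaveOnPos

theorem integral_comp_eq_setIntegral_mul {Ω : Type*} [MeasurableSpace Ω] (P : Measure Ω)
    {η : Ω → ℝ} (hη : Measurable η) {g : ℝ → ℝ} (hg0 : ∀ x, 0 ≤ g x) (hgm : Measurable g)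
    (hgsupp : ∀ x : ℝ, x ≤ 0 → g x = 0)
    (hdens : P.map η = volume.withDensity fun x => ENNReal.ofReal (g x))
    {f : ℝ → ℝ} (hf : Measurable f) :
    ∫ ω, f (η ω) ∂P = ∫ t in Ioi 0, f t * g t := by
  rw [← integral_map hη.aemeasurable hf.aestronglyMeasurable, hdens,
    integral_withDensity_eq_integral_toReal_smul (f := fun x => ENNReal.ofReal (g x)) (by fun_prop)
      (Eventually.of_forall fun _ => ENNReal.ofReal_lt_top)]
  simp_rw [ENNReal.toReal_ofReal (hg0 _), smul_eq_mul, mul_comm (g _)]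
  refine (setIntegral_eq_integral_of_forall_compl_eq_zero fun x hx => ?_).symm
  rw [hgsupp x (not_lt.1 hx), mul_zero]

theorem reverse_lyapunov_gamma_normalized_general
    {Ω : Type*} [MeasureSpace Ω] [IsProbabilityMeasure (ℙ : Measure Ω)]
    (η : Ω → ℝ) (hηm : Measurable η)
    (g : ℝ → ℝ) (hgnn : ∀ x, 0 ≤ g x) (hgm : Measurable g)
    (hgsupp : ∀ x : ℝ, x ≤ 0 → g x = 0)
    (hdens : Measure.map η ℙ = volume.withDensity (fun x => ENNReal.ofReal (g x)))
    (hlc : ∀ x y : ℝ, 0 < x → 0 < y → ∀ l : ℝ, 0 ≤ l → l ≤ 1 →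
      g x ^ l * g y ^ (1 - l) ≤ g (l * x + (1 - l) * y))
    (L : ℝ → ℝ)
    (hL : ∀ p : ℝ, L p = (∫ ω, η ω ^ p) / Real.Gamma (p + 1)) :
    (∀ a b l : ℝ, 0 ≤ a → 0 ≤ b → 0 ≤ l → l ≤ 1 →
      L a ^ l * L b ^ (1 - l) ≤ L (l * a + (1 - l) * b)) ∧
    (∀ a b c : ℝ, 0 ≤ c → c ≤ b → b ≤ a →
      L a ^ (b - c) * L c ^ (a - b) ≤ L b ^ (a - c)) := by
  have hmom (p : ℝ) : ∫ ω, η ω ^ p = ∫ t in Ioi 0, t ^ p * g t :=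
    integral_comp_eq_setIntegral_mul ℙ hηm hgnn hgm hgsupp hdens (measurable_id.pow_const p)
  obtain rfl : L = normalizedMoment g := funext fun p => by rw [hL, hmom]; rfl
  have hmass : ∫ t in Ioi 0, g t = 1 := by simpa using (hmom 0).symm
  -- the Bochner integral of a non-integrable function is `0`
  have hint : IntegrableOn g (Ioi 0) := .of_integral_ne_zero (by rw [hmass]; exact one_ne_zero)
  have hpint (p : ℝ) (hp : 0 ≤ p) : IntegrableOn (fun t => t ^ p * g t) (Ioi 0) :=
    LogConcaveOnPos.integrableOn_rpow_mul hlc hgnn hint hp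
  have hpos (p : ℝ) (hp : p ∈ Ici (0 : ℝ)) : 0 < normalizedMoment g p :=
    normalizedMoment_pos hgnn hp hint (hpint p hp) (by rw [hmass]; exact one_pos)
  have hconc := LogConcaveOnPos.concaveOn_log_normalizedMoment hlc hpint hpos
  exact ⟨fun a b l ha hb hl0 hl1 => hconc.rpow_mul_rpow_le_of_log hpos ha hb hl0 hl1,
    fun a b c hc hcb hba => hconc.rpow_sub_mul_rpow_sub_le_of_log hpos
      (hc.trans (hcb.trans hba)) hc hcb hba⟩

theorem reverse_lyapunov_gamma_normalized
    {Ω : Type*} [MeasureSpace Ω] [IsProbabilityMeasure (ℙ : Measure Ω)]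
    (η : Ω → ℝ) (hηm : Measurable η) (hηpos : ∀ ω, 0 < η ω)
    (g : ℝ → ℝ) (hgnn : ∀ x, 0 ≤ g x) (hgm : Measurable g)
    (hgsupp : ∀ x : ℝ, x ≤ 0 → g x = 0)
    (hdens : Measure.map η ℙ = volume.withDensity (fun x => ENNReal.ofReal (g x)))
    (hlc : ∀ x y : ℝ, 0 < x → 0 < y → ∀ l : ℝ, 0 ≤ l → l ≤ 1 →
      g x ^ l * g y ^ (1 - l) ≤ g (l * x + (1 - l) * y))
    (L : ℝ → ℝ)
    (hL : ∀ p : ℝ, L p = (∫ ω, η ω ^ p) / Real.Gamma (p + 1)) :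
    (∀ a b l : ℝ, 0 ≤ a → 0 ≤ b → 0 ≤ l → l ≤ 1 →
      L a ^ l * L b ^ (1 - l) ≤ L (l * a + (1 - l) * b)) ∧
    (∀ a b c : ℝ, 0 ≤ c → c ≤ b → b ≤ a →
      L a ^ (b - c) * L c ^ (a - b) ≤ L b ^ (a - c)) :=
  reverse_lyapunov_gamma_normalized_general η hηm g hgnn hgm hgsupp hdens hlc L hL
end

section
/- Let η be a positive random variable whose distribution is log-concave (i.e., whose density on (0,∞) with respect to Lebesgue measure is log-concave). Then the function p ↦ λ̂_p = E[(η/p)^p] is log-concave in p > 0; in particular, for all a ≥ b ≥ c > 0, λ̂_a^{b−c} · λ̂_c^{a−b} ≤ λ̂_b^{a−c}. -/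
/-!
Write `f_p(x) = g(x) (x/p)^p`, so that `λ̂_p = ∫ f_p`. For `p = l a + (1 - l) b` the functions
satisfy the Prékopa–Leindler hypothesis `f_a(x)^l f_b(y)^(1-l) ≤ f_p(l x + (1 - l) y)`: the
density contributes through its log-concavity, and the power factor through the weighted AM-GM
inequality, which says that `(x, p) ↦ p log (x / p)` is jointly concave. Prékopa–Leindler on the
line then gives `λ̂_a^l λ̂_b^(1-l) ≤ λ̂_p`. It is proved from the one-dimensional Brunn–Minkowski
inequality `|l A + (1 - l) B| ≥ l |A| + (1 - l) |B|`, applied to the level sets of `f`, `g`, `h`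
through the layer-cake formula once `f` and `g` are normalized to have supremum `1`; unbounded
functions are handled by truncation and monotone convergence.
-/

open MeasureTheory ProbabilityTheory Set
open scoped Pointwise

lemma Real.volume_image_mul_add (c d : ℝ) (K : Set ℝ) :
    volume ((fun x => c * x + d) '' K) = ENNReal.ofReal |c| * volume K := by
  have : (fun x => c * x + d) '' K = (· + d) '' (c • K) := by
    rw [← image_smul, image_image]; rfl
  rw [this, image_add_right, measure_preimage_add_right, Measure.addHaar_smul]
  simp

lemma Real.brunn_minkowski_of_isCompact {l : ℝ} (hl0 : 0 ≤ l) (hl1 : l ≤ 1) {K K' S : Set ℝ}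
    (hK : IsCompact K) (hK' : IsCompact K') (hKne : K.Nonempty) (hK'ne : K'.Nonempty)
    (hsub : ∀ x ∈ K, ∀ y ∈ K', l * x + (1 - l) * y ∈ S) :
    ENNReal.ofReal l * volume K + ENNReal.ofReal (1 - l) * volume K' ≤ volume S := by
  -- `P` and `Q` are translates of `l • K` and `(1 - l) • K'` inside `S` meeting in one point.
  obtain ⟨x₀, hx₀K, hx₀max⟩ := hK.exists_isGreatest hKne
  obtain ⟨y₀, hy₀K', hy₀min⟩ := hK'.exists_isLeast hK'ne
  set P := (fun x => l * x + (1 - l) * y₀) '' K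
  set Q := (fun y => (1 - l) * y + l * x₀) '' K'
  have hPQ : P ∩ Q ⊆ {l * x₀ + (1 - l) * y₀} := by
    rintro z ⟨⟨x, hx, rfl⟩, ⟨y, hy, hzy⟩⟩
    have := hx₀max hx
    have := hy₀min hy
    simp only [mem_singleton_iff]
    nlinarith
  have hPS : P ⊆ S := by
    rintro _ ⟨x, hx, rfl⟩
    exact hsub x hx y₀ hy₀K'
  have hQS : Q ⊆ S := by
    rintro _ ⟨y, hy, rfl⟩
    simpa [add_comm] using hsub x₀ hx₀K y hy
  calc ENNReal.ofReal l * volume K + ENNReal.ofReal (1 - l) * volume K'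
      = volume P + volume Q := by
        rw [Real.volume_image_mul_add, Real.volume_image_mul_add, abs_of_nonneg hl0,
          abs_of_nonneg (sub_nonneg.2 hl1)]
    _ = volume (P ∪ Q) + volume (P ∩ Q) :=
        (measure_union_add_inter P (hK'.image (by fun_prop)).measurableSet).symm
    _ = volume (P ∪ Q) := by rw [measure_mono_null hPQ (measure_singleton _), add_zero]
    _ ≤ volume S := measure_mono (union_subset hPS hQS)

lemma Real.brunn_minkowski {l : ℝ} (hl0 : 0 ≤ l) (hl1 : l ≤ 1) {A B S : Set ℝ}
    (hA : MeasurableSet A) (hB : MeasurableSet B) (hAne : A.Nonempty) (hBne : B.Nonempty)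
    (hsub : ∀ x ∈ A, ∀ y ∈ B, l * x + (1 - l) * y ∈ S) :
    ENNReal.ofReal l * volume A + ENNReal.ofReal (1 - l) * volume B ≤ volume S := by
  obtain ⟨a₀, ha₀⟩ := hAne
  obtain ⟨b₀, hb₀⟩ := hBne
  have inner (c : ENNReal) {U : Set ℝ} (hU : MeasurableSet U) :
      c * volume U = ⨆ (K : Set ℝ) (_ : K ⊆ U ∧ IsCompact K), c * volume K := by
    simp_rw [hU.measure_eq_iSup_isCompact, ENNReal.mul_iSup, iSup_and]
  rw [inner _ hA, inner _ hB]
  refine ENNReal.biSup_add_biSup_le' ⟨∅, empty_subset _, isCompact_empty⟩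
    ⟨∅, empty_subset _, isCompact_empty⟩ fun K ⟨hKA, hK⟩ K' ⟨hK'B, hK'⟩ => ?_
  calc ENNReal.ofReal l * volume K + ENNReal.ofReal (1 - l) * volume K'
      ≤ ENNReal.ofReal l * volume (insert a₀ K) +
          ENNReal.ofReal (1 - l) * volume (insert b₀ K') := by
        gcongr <;> exact subset_insert _ _
    _ ≤ volume S :=
        Real.brunn_minkowski_of_isCompact hl0 hl1 (hK.insert a₀) (hK'.insert b₀)
          (insert_nonempty _ _) (insert_nonempty _ _) fun x hx y hy =>
            hsub x (insert_subset ha₀ hKA hx) y (insert_subset hb₀ hK'B hy)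

lemma ENNReal.rpow_mul_rpow_le_add {l : ℝ} (hl0 : 0 < l) (hl1 : l < 1) (X Y : ENNReal) :
    X ^ l * Y ^ (1 - l) ≤ ENNReal.ofReal l * X + ENNReal.ofReal (1 - l) * Y := by
  rcases eq_top_or_lt_top X with rfl | hX
  · simp [ENNReal.mul_top, hl0]
  rcases eq_top_or_lt_top Y with rfl | hY
  · simp [ENNReal.mul_top, hl1]
  lift X to NNReal using hX.ne
  lift Y to NNReal using hY.ne
  have key := NNReal.geom_mean_le_arith_mean2_weighted l.toNNReal (1 - l).toNNReal X Y
    (by rw [← Real.toNNReal_add hl0.le (by linarith)]; simp)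
  rw [ENNReal.ofReal, ENNReal.ofReal, ← ENNReal.coe_rpow_of_nonneg _ hl0.le,
    ← ENNReal.coe_rpow_of_nonneg _ (by linarith)]
  rw [Real.coe_toNNReal l hl0.le, Real.coe_toNNReal _ (by linarith)] at key
  exact_mod_cast key

lemma Real.min_le_rpow_mul_rpow {a b l : ℝ} (ha : 0 ≤ a) (hb : 0 ≤ b) (hl0 : 0 ≤ l) (hl1 : l ≤ 1) :
    min a b ≤ a ^ l * b ^ (1 - l) := by
  calc min a b = min a b ^ l * min a b ^ (1 - l) := by
        rw [← Real.rpow_add' (le_min ha hb) (by norm_num)]; simp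
    _ ≤ a ^ l * b ^ (1 - l) := by
        have := le_min ha hb
        gcongr
        exacts [min_le_left a b, min_le_right a b]

lemma Real.lintegral_convex_comb_le_of_min_le {l : ℝ} (hl0 : 0 ≤ l) (hl1 : l ≤ 1)
    {f g h : ℝ → ℝ} (hf : Measurable f) (hg : Measurable g) (hh : Measurable h)
    (hf0 : ∀ x, 0 ≤ f x) (hg0 : ∀ x, 0 ≤ g x)
    (hsup : ∀ t, (∃ x, t < f x) ↔ ∃ y, t < g y)
    (hyp : ∀ x y, min (f x) (g y) ≤ h (l * x + (1 - l) * y)) :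
    ENNReal.ofReal l * (∫⁻ x, ENNReal.ofReal (f x)) +
        ENNReal.ofReal (1 - l) * ∫⁻ x, ENNReal.ofReal (g x) ≤ ∫⁻ x, ENNReal.ofReal (h x) := by
  have hh0 (z : ℝ) : 0 ≤ h z := by
    have := (le_min (hf0 z) (hg0 z)).trans (hyp z z)
    rwa [← add_mul, add_sub_cancel, one_mul] at this
  have hlevel (k : ℝ → ℝ) : Measurable fun t => volume {x | t < k x} :=
    Antitone.measurable fun s t hst => measure_mono fun x hx => hst.trans_lt hx
  rw [lintegral_eq_lintegral_meas_lt _ (ae_of_all _ hf0) hf.aemeasurable,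
    lintegral_eq_lintegral_meas_lt _ (ae_of_all _ hg0) hg.aemeasurable,
    lintegral_eq_lintegral_meas_lt _ (ae_of_all _ hh0) hh.aemeasurable,
    ← lintegral_const_mul _ (hlevel f), ← lintegral_const_mul _ (hlevel g),
    ← lintegral_add_left ((hlevel f).const_mul _)]
  refine lintegral_mono fun t => ?_
  by_cases ht : ∃ x, t < f x
  · exact Real.brunn_minkowski hl0 hl1 (measurableSet_lt measurable_const hf)
      (measurableSet_lt measurable_const hg) ht ((hsup t).1 ht)
      fun x hx y hy => (lt_min hx hy).trans_le (hyp x y)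
  · have hg' : ¬∃ y, t < g y := (hsup t).not.1 ht
    simp only [not_exists, not_lt] at ht hg'
    simp [not_lt.2 (ht _), not_lt.2 (hg' _)]

lemma ENNReal.iSup_rpow {ι : Sort*} {p : ℝ} (hp : 0 < p) (f : ι → ENNReal) :
    (⨆ i, f i) ^ p = ⨆ i, f i ^ p :=
  (ENNReal.monotone_rpow_of_nonneg hp.le).map_iSup_of_continuousAt
    ENNReal.continuous_rpow_const.continuousAt (ENNReal.zero_rpow_of_pos hp)

lemma lintegral_ofReal_eq_ofReal_mul_lintegral_div {α : Type*} [MeasurableSpace α] {μ : Measure α}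
    {c : ℝ} (hc : 0 < c) (f : α → ℝ) :
    ∫⁻ x, ENNReal.ofReal (f x) ∂μ = ENNReal.ofReal c * ∫⁻ x, ENNReal.ofReal (f x / c) ∂μ := by
  rw [← lintegral_const_mul' _ _ ENNReal.ofReal_ne_top]
  congr with x
  rw [← ENNReal.ofReal_mul hc.le, mul_div_cancel₀ _ hc.ne']

lemma lintegral_ofReal_eq_iSup_lintegral_min {α : Type*} [MeasurableSpace α] {μ : Measure α}
    {f : α → ℝ} (hf : Measurable f) :
    ∫⁻ x, ENNReal.ofReal (f x) ∂μ = ⨆ n : ℕ, ∫⁻ x, ENNReal.ofReal (min (f x) n) ∂μ := by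
  rw [← lintegral_iSup (fun n => (hf.min measurable_const).ennreal_ofReal)
    fun m n hmn x => ENNReal.ofReal_le_ofReal (min_le_min_left _ (Nat.cast_le.2 hmn))]
  congr with x
  refine le_antisymm ?_ (iSup_le fun n => ENNReal.ofReal_le_ofReal (min_le_left _ _))
  obtain ⟨n, hn⟩ := exists_nat_ge (f x)
  exact le_iSup_of_le n (by rw [min_eq_left hn])

lemma exists_lt_div_ciSup_iff {α : Type*} [Nonempty α] {f : α → ℝ} (hbdd : BddAbove (range f))
    (hpos : 0 < ⨆ x, f x) (t : ℝ) : (∃ x, t < f x / ⨆ x, f x) ↔ t < 1 := by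
  refine ⟨fun ⟨x, hx⟩ => hx.trans_le ((div_le_one hpos).2 (le_ciSup hbdd x)), fun ht => ?_⟩
  obtain ⟨x, hx⟩ := exists_lt_of_lt_ciSup (by nlinarith : t * ⨆ x, f x < ⨆ x, f x)
  exact ⟨x, (lt_div_iff₀ hpos).2 hx⟩

lemma Real.prekopa_leindler_of_bddAbove {l : ℝ} (hl0 : 0 < l) (hl1 : l < 1)
    {f g h : ℝ → ℝ} (hf : Measurable f) (hg : Measurable g) (hh : Measurable h)
    (hf0 : ∀ x, 0 ≤ f x) (hg0 : ∀ x, 0 ≤ g x)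
    (hfb : BddAbove (range f)) (hgb : BddAbove (range g))
    (hyp : ∀ x y, f x ^ l * g y ^ (1 - l) ≤ h (l * x + (1 - l) * y)) :
    (∫⁻ x, ENNReal.ofReal (f x)) ^ l * (∫⁻ x, ENNReal.ofReal (g x)) ^ (1 - l) ≤
      ∫⁻ x, ENNReal.ofReal (h x) := by
  set Mf := ⨆ x, f x
  set Mg := ⨆ x, g x
  rcases (Real.iSup_nonneg hf0).eq_or_lt with hMf | hMf
  · have : ∀ x, f x = 0 := fun x => le_antisymm (hMf ▸ le_ciSup hfb x) (hf0 x)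
    simp [this, hl0]
  rcases (Real.iSup_nonneg hg0).eq_or_lt with hMg | hMg
  · have : ∀ x, g x = 0 := fun x => le_antisymm (hMg ▸ le_ciSup hgb x) (hg0 x)
    simp [this, hl1]
  set c := Mf ^ l * Mg ^ (1 - l)
  have hc : 0 < c := by positivity
  -- After dividing `f`, `g` by their suprema and `h` by `c`, both suprema are `1`.
  have hlin := Real.lintegral_convex_comb_le_of_min_le hl0.le hl1.le
    (f := fun x => f x / Mf) (g := fun y => g y / Mg) (h := fun z => h z / c)
    (hf.div_const _) (hg.div_const _) (hh.div_const _)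
    (fun x => div_nonneg (hf0 x) hMf.le) (fun y => div_nonneg (hg0 y) hMg.le)
    (fun t => by rw [exists_lt_div_ciSup_iff hfb hMf, exists_lt_div_ciSup_iff hgb hMg])
    fun x y => by
      refine (Real.min_le_rpow_mul_rpow (div_nonneg (hf0 x) hMf.le) (div_nonneg (hg0 y) hMg.le)
        hl0.le hl1.le).trans ?_
      rw [Real.div_rpow (hf0 x) hMf.le, Real.div_rpow (hg0 y) hMg.le, div_mul_div_comm]
      exact div_le_div_of_nonneg_right (hyp x y) hc.le
  rw [lintegral_ofReal_eq_ofReal_mul_lintegral_div hMf f,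
    lintegral_ofReal_eq_ofReal_mul_lintegral_div hMg g,
    lintegral_ofReal_eq_ofReal_mul_lintegral_div hc h,
    ENNReal.mul_rpow_of_nonneg _ _ hl0.le, ENNReal.mul_rpow_of_nonneg _ _ (by linarith),
    ENNReal.ofReal_rpow_of_pos hMf, ENNReal.ofReal_rpow_of_pos hMg,
    mul_mul_mul_comm, ← ENNReal.ofReal_mul (by positivity)]
  gcongr
  exact (ENNReal.rpow_mul_rpow_le_add hl0 hl1 _ _).trans hlin

lemma Real.prekopa_leindler {l : ℝ} (hl0 : 0 < l) (hl1 : l < 1)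
    {f g h : ℝ → ℝ} (hf : Measurable f) (hg : Measurable g) (hh : Measurable h)
    (hf0 : ∀ x, 0 ≤ f x) (hg0 : ∀ x, 0 ≤ g x)
    (hyp : ∀ x y, f x ^ l * g y ^ (1 - l) ≤ h (l * x + (1 - l) * y)) :
    (∫⁻ x, ENNReal.ofReal (f x)) ^ l * (∫⁻ x, ENNReal.ofReal (g x)) ^ (1 - l) ≤
      ∫⁻ x, ENNReal.ofReal (h x) := by
  rw [lintegral_ofReal_eq_iSup_lintegral_min hf, lintegral_ofReal_eq_iSup_lintegral_min hg,
    ENNReal.iSup_rpow hl0, ENNReal.iSup_rpow (by linarith), ENNReal.iSup_mul]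
  refine iSup_le fun m => ?_
  rw [ENNReal.mul_iSup]
  refine iSup_le fun n => Real.prekopa_leindler_of_bddAbove hl0 hl1
    (hf.min measurable_const) (hg.min measurable_const) hh
    (fun x => le_min (hf0 x) m.cast_nonneg) (fun y => le_min (hg0 y) n.cast_nonneg)
    ⟨m, by rintro _ ⟨x, rfl⟩; exact min_le_right _ _⟩
    ⟨n, by rintro _ ⟨y, rfl⟩; exact min_le_right _ _⟩ fun x y => ?_
  calc min (f x) (m : ℝ) ^ l * min (g y) (n : ℝ) ^ (1 - l) ≤ f x ^ l * g y ^ (1 - l) := by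
        have hm := le_min (hf0 x) (m.cast_nonneg (α := ℝ))
        have hn := le_min (hg0 y) (n.cast_nonneg (α := ℝ))
        exact mul_le_mul (Real.rpow_le_rpow hm (min_le_left _ _) hl0.le)
          (Real.rpow_le_rpow hn (min_le_left _ _) (by linarith)) (Real.rpow_nonneg hn _)
          (Real.rpow_nonneg (hf0 x) _)
    _ ≤ h (l * x + (1 - l) * y) := hyp x y

lemma convex_comb_pos {a b l : ℝ} (ha : 0 < a) (hb : 0 < b) (hl0 : 0 ≤ l) (hl1 : l ≤ 1) :
    0 < l * a + (1 - l) * b := by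
  simpa using convex_Ioi (0 : ℝ) ha hb hl0 (sub_nonneg.2 hl1) (add_sub_cancel l 1)

lemma Real.geom_mean_div_rpow_self_le {a b x y l : ℝ} (ha : 0 < a) (hb : 0 < b)
    (hx : 0 ≤ x) (hy : 0 ≤ y) (hl0 : 0 ≤ l) (hl1 : l ≤ 1) :
    ((x / a) ^ a) ^ l * ((y / b) ^ b) ^ (1 - l) ≤
      ((l * x + (1 - l) * y) / (l * a + (1 - l) * b)) ^ (l * a + (1 - l) * b) := by
  have hp := convex_comb_pos ha hb hl0 hl1
  set p := l * a + (1 - l) * b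
  have hxa : 0 ≤ x / a := by positivity
  have hyb : 0 ≤ y / b := by positivity
  have hα : 0 ≤ l * a / p := by positivity
  have hβ : 0 ≤ (1 - l) * b / p := div_nonneg (mul_nonneg (by linarith) hb.le) hp.le
  have hαβ : l * a / p + (1 - l) * b / p = 1 := by rw [← add_div, div_self hp.ne']
  have hmean : l * a / p * (x / a) + (1 - l) * b / p * (y / b) = (l * x + (1 - l) * y) / p := by
    field_simp
  calc ((x / a) ^ a) ^ l * ((y / b) ^ b) ^ (1 - l)
      = ((x / a) ^ (l * a / p) * (y / b) ^ ((1 - l) * b / p)) ^ p := by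
        rw [Real.mul_rpow (by positivity) (by positivity), ← Real.rpow_mul hxa, ← Real.rpow_mul hxa,
          ← Real.rpow_mul hyb, ← Real.rpow_mul hyb, div_mul_cancel₀ _ hp.ne',
          div_mul_cancel₀ _ hp.ne', mul_comm a, mul_comm b]
    _ ≤ ((l * x + (1 - l) * y) / p) ^ p := by
        rw [← hmean]
        gcongr
        exact Real.geom_mean_le_arith_mean2_weighted hα hβ hxa hyb hαβ

lemma Real.rpow_le_rpow_add_rpow {x a b l : ℝ} (hx : 0 < x) (hl0 : 0 ≤ l) (hl1 : l ≤ 1) :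
    x ^ (l * a + (1 - l) * b) ≤ x ^ a + x ^ b := by
  have hxa := Real.rpow_nonneg hx.le a
  have hxb := Real.rpow_nonneg hx.le b
  calc x ^ (l * a + (1 - l) * b) = (x ^ a) ^ l * (x ^ b) ^ (1 - l) := by
        rw [Real.rpow_add hx, ← Real.rpow_mul hx.le, ← Real.rpow_mul hx.le, mul_comm l,
          mul_comm (1 - l)]
    _ ≤ l * x ^ a + (1 - l) * x ^ b :=
        Real.geom_mean_le_arith_mean2_weighted hl0 (by linarith) hxa hxb (by ring)
    _ ≤ x ^ a + x ^ b := by nlinarith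

/-- The paper's `λ̂_p = E[(η / p) ^ p]`, written against the density `g` of `η`. -/
noncomputable def normalizedPowerMoment (g : ℝ → ℝ) (p : ℝ) : ENNReal :=
  ∫⁻ x, ENNReal.ofReal (g x * (x / p) ^ p)

lemma mul_div_rpow_self_nonneg {g : ℝ → ℝ} (hgnn : ∀ x, 0 ≤ g x)
    (hgsupp : ∀ x : ℝ, x ≤ 0 → g x = 0) {p : ℝ} (hp : 0 ≤ p) (x : ℝ) :
    0 ≤ g x * (x / p) ^ p := by
  rcases le_or_gt x 0 with hx | hx
  · simp [hgsupp x hx]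
  · exact mul_nonneg (hgnn x) (Real.rpow_nonneg (div_nonneg hx.le hp) _)

lemma integral_div_rpow_eq_toReal_normalizedPowerMoment {Ω : Type*} [MeasureSpace Ω]
    {η : Ω → ℝ} (hηm : Measurable η) {g : ℝ → ℝ} (hgnn : ∀ x, 0 ≤ g x) (hgm : Measurable g)
    (hgsupp : ∀ x : ℝ, x ≤ 0 → g x = 0)
    (hdens : Measure.map η ℙ = volume.withDensity (fun x => ENNReal.ofReal (g x)))
    {p : ℝ} (hp : 0 ≤ p) :
    ∫ ω, (η ω / p) ^ p = (normalizedPowerMoment g p).toReal := by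
  have hφ : Measurable fun x : ℝ => (x / p) ^ p := by fun_prop
  rw [← integral_map hηm.aemeasurable hφ.aestronglyMeasurable,
    hdens, integral_withDensity_eq_integral_toReal_smul (by fun_prop), normalizedPowerMoment,
    ← integral_eq_lintegral_of_nonneg_ae (ae_of_all _ (mul_div_rpow_self_nonneg hgnn hgsupp hp))
      (by fun_prop : Measurable fun x => g x * (x / p) ^ p).aestronglyMeasurable]
  · simp [ENNReal.toReal_ofReal (hgnn _)]
  · exact ae_of_all _ fun _ => ENNReal.ofReal_lt_top

lemma normalizedPowerMoment_ne_top {g : ℝ → ℝ} (hgnn : ∀ x, 0 ≤ g x) (hgm : Measurable g)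
    (hgsupp : ∀ x : ℝ, x ≤ 0 → g x = 0) {a b l : ℝ} (ha : 0 < a) (hb : 0 < b) (hl0 : 0 ≤ l)
    (hl1 : l ≤ 1) (hMa : normalizedPowerMoment g a ≠ ⊤) (hMb : normalizedPowerMoment g b ≠ ⊤) :
    normalizedPowerMoment g (l * a + (1 - l) * b) ≠ ⊤ := by
  have hp := convex_comb_pos ha hb hl0 hl1
  set p := l * a + (1 - l) * b
  have hbound (x : ℝ) : g x * (x / p) ^ p ≤
      a ^ a / p ^ p * (g x * (x / a) ^ a) + b ^ b / p ^ p * (g x * (x / b) ^ b) := by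
    rcases le_or_gt x 0 with hx | hx
    · simp [hgsupp x hx]
    rw [Real.div_rpow hx.le hp.le, Real.div_rpow hx.le ha.le, Real.div_rpow hx.le hb.le]
    have := Real.rpow_le_rpow_add_rpow (a := a) (b := b) hx hl0 hl1
    field_simp
    exact mul_le_mul_of_nonneg_left this (hgnn x)
  have hmeas (q : ℝ) : Measurable fun x => ENNReal.ofReal (g x * (x / q) ^ q) := by fun_prop
  refine ne_top_of_le_ne_top (b := ENNReal.ofReal (a ^ a / p ^ p) * normalizedPowerMoment g a +
    ENNReal.ofReal (b ^ b / p ^ p) * normalizedPowerMoment g b) (by finiteness) ?_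
  rw [normalizedPowerMoment, normalizedPowerMoment, normalizedPowerMoment,
    ← lintegral_const_mul _ (hmeas a), ← lintegral_const_mul _ (hmeas b),
    ← lintegral_add_left ((hmeas a).const_mul _)]
  refine lintegral_mono fun x => (ENNReal.ofReal_le_ofReal (hbound x)).trans ?_
  rw [← ENNReal.ofReal_mul (by positivity), ← ENNReal.ofReal_mul (by positivity)]
  exact ENNReal.ofReal_add_le

lemma normalizedPowerMoment_rpow_mul_rpow_le {g : ℝ → ℝ} (hgnn : ∀ x, 0 ≤ g x)
    (hgm : Measurable g) (hgsupp : ∀ x : ℝ, x ≤ 0 → g x = 0)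
    (hlc : ∀ x y : ℝ, 0 < x → 0 < y → ∀ l : ℝ, 0 ≤ l → l ≤ 1 →
      g x ^ l * g y ^ (1 - l) ≤ g (l * x + (1 - l) * y))
    {a b l : ℝ} (ha : 0 < a) (hb : 0 < b) (hl0 : 0 < l) (hl1 : l < 1) :
    normalizedPowerMoment g a ^ l * normalizedPowerMoment g b ^ (1 - l) ≤
      normalizedPowerMoment g (l * a + (1 - l) * b) := by
  refine Real.prekopa_leindler hl0 hl1 (by fun_prop) (by fun_prop) (by fun_prop)
    (mul_div_rpow_self_nonneg hgnn hgsupp ha.le) (mul_div_rpow_self_nonneg hgnn hgsupp hb.le)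
    fun x y => ?_
  have hp := convex_comb_pos ha hb hl0.le hl1.le
  rcases le_or_gt x 0 with hx | hx
  · simp [hgsupp x hx, Real.zero_rpow hl0.ne',
      mul_div_rpow_self_nonneg hgnn hgsupp hp.le]
  rcases le_or_gt y 0 with hy | hy
  · simp [hgsupp y hy, Real.zero_rpow (sub_pos.2 hl1).ne',
      mul_div_rpow_self_nonneg hgnn hgsupp hp.le]
  rw [Real.mul_rpow (hgnn x) (by positivity), Real.mul_rpow (hgnn y) (by positivity),
    mul_mul_mul_comm]
  exact mul_le_mul (hlc x y hx hy l hl0.le hl1.le)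
    (Real.geom_mean_div_rpow_self_le ha hb hx.le hy.le hl0.le hl1.le) (by positivity)
    (hgnn _)

lemma toReal_normalizedPowerMoment_rpow_mul_rpow_le {g : ℝ → ℝ} (hgnn : ∀ x, 0 ≤ g x)
    (hgm : Measurable g) (hgsupp : ∀ x : ℝ, x ≤ 0 → g x = 0)
    (hlc : ∀ x y : ℝ, 0 < x → 0 < y → ∀ l : ℝ, 0 ≤ l → l ≤ 1 →
      g x ^ l * g y ^ (1 - l) ≤ g (l * x + (1 - l) * y))
    {a b l : ℝ} (ha : 0 < a) (hb : 0 < b) (hl0 : 0 ≤ l) (hl1 : l ≤ 1) :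
    (normalizedPowerMoment g a).toReal ^ l * (normalizedPowerMoment g b).toReal ^ (1 - l) ≤
      (normalizedPowerMoment g (l * a + (1 - l) * b)).toReal := by
  rcases hl0.eq_or_lt with rfl | hl0
  · simp
  rcases hl1.eq_or_lt with rfl | hl1
  · simp
  by_cases hMa : normalizedPowerMoment g a = ⊤
  · simp [hMa, Real.zero_rpow hl0.ne']
  by_cases hMb : normalizedPowerMoment g b = ⊤
  · simp [hMb, Real.zero_rpow (sub_pos.2 hl1).ne']
  rw [ENNReal.toReal_rpow, ENNReal.toReal_rpow, ← ENNReal.toReal_mul]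
  exact ENNReal.toReal_mono
    (normalizedPowerMoment_ne_top hgnn hgm hgsupp ha hb hl0.le hl1.le hMa hMb)
    (normalizedPowerMoment_rpow_mul_rpow_le hgnn hgm hgsupp hlc ha hb hl0 hl1)

lemma rpow_mul_rpow_le_rpow_of_logConcave {L : ℝ → ℝ} (hL0 : ∀ p, 0 < p → 0 ≤ L p)
    (hL : ∀ a b l : ℝ, 0 < a → 0 < b → 0 ≤ l → l ≤ 1 →
      L a ^ l * L b ^ (1 - l) ≤ L (l * a + (1 - l) * b))
    {a b c : ℝ} (hc : 0 < c) (hcb : c ≤ b) (hba : b ≤ a) :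
    L a ^ (b - c) * L c ^ (a - b) ≤ L b ^ (a - c) := by
  rcases (hcb.trans hba).eq_or_lt with rfl | hca
  · obtain rfl := le_antisymm hba hcb
    simp
  have hac : 0 < a - c := sub_pos.2 hca
  have ha := hc.trans hca
  set l := (b - c) / (a - c)
  have hl0 : 0 ≤ l := div_nonneg (sub_nonneg.2 hcb) hac.le
  have hl1 : l ≤ 1 := (div_le_one hac).2 (by linarith)
  have hlb : l * (a - c) = b - c := div_mul_cancel₀ _ hac.ne'
  have hlb' : (1 - l) * (a - c) = a - b := by rw [sub_mul, one_mul, hlb]; ring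
  have hb : l * a + (1 - l) * c = b := by linear_combination hlb
  have hLa := hL0 a ha
  have hLc := hL0 c hc
  calc L a ^ (b - c) * L c ^ (a - b) = (L a ^ l * L c ^ (1 - l)) ^ (a - c) := by
        rw [Real.mul_rpow (by positivity) (by positivity), ← Real.rpow_mul hLa,
          ← Real.rpow_mul hLc, hlb, hlb']
    _ ≤ L b ^ (a - c) := by
        gcongr
        simpa [hb] using hL a c l ha hc hl0 hl1

theorem reverse_lyapunov_power_normalized_general
    {Ω : Type*} [MeasureSpace Ω]
    (η : Ω → ℝ) (hηm : Measurable η)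
    (g : ℝ → ℝ) (hgnn : ∀ x, 0 ≤ g x) (hgm : Measurable g)
    (hgsupp : ∀ x : ℝ, x ≤ 0 → g x = 0)
    (hdens : Measure.map η ℙ = volume.withDensity (fun x => ENNReal.ofReal (g x)))
    (hlc : ∀ x y : ℝ, 0 < x → 0 < y → ∀ l : ℝ, 0 ≤ l → l ≤ 1 →
      g x ^ l * g y ^ (1 - l) ≤ g (l * x + (1 - l) * y))
    (L : ℝ → ℝ)
    (hL : ∀ p : ℝ, L p = ∫ ω, (η ω / p) ^ p) :
    (∀ a b l : ℝ, 0 < a → 0 < b → 0 ≤ l → l ≤ 1 →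
      L a ^ l * L b ^ (1 - l) ≤ L (l * a + (1 - l) * b)) ∧
    (∀ a b c : ℝ, 0 < c → c ≤ b → b ≤ a →
      L a ^ (b - c) * L c ^ (a - b) ≤ L b ^ (a - c)) := by
  have hLM (p : ℝ) (hp : 0 < p) : L p = (normalizedPowerMoment g p).toReal :=
    (hL p).trans (integral_div_rpow_eq_toReal_normalizedPowerMoment hηm hgnn hgm hgsupp hdens hp.le)
  have hlogConcave : ∀ a b l : ℝ, 0 < a → 0 < b → 0 ≤ l → l ≤ 1 →
      L a ^ l * L b ^ (1 - l) ≤ L (l * a + (1 - l) * b) := by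
    intro a b l ha hb hl0 hl1
    rw [hLM a ha, hLM b hb, hLM _ (convex_comb_pos ha hb hl0 hl1)]
    exact toReal_normalizedPowerMoment_rpow_mul_rpow_le hgnn hgm hgsupp hlc ha hb hl0 hl1
  refine ⟨hlogConcave, fun a b c hc hcb hba => ?_⟩
  exact rpow_mul_rpow_le_rpow_of_logConcave (fun p hp => hLM p hp ▸ ENNReal.toReal_nonneg)
    hlogConcave hc hcb hba

theorem reverse_lyapunov_power_normalized
    {Ω : Type*} [MeasureSpace Ω] [IsProbabilityMeasure (ℙ : Measure Ω)]
    (η : Ω → ℝ) (hηm : Measurable η) (hηpos : ∀ ω, 0 < η ω)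
    (g : ℝ → ℝ) (hgnn : ∀ x, 0 ≤ g x) (hgm : Measurable g)
    (hgsupp : ∀ x : ℝ, x ≤ 0 → g x = 0)
    (hdens : Measure.map η ℙ = volume.withDensity (fun x => ENNReal.ofReal (g x)))
    (hlc : ∀ x y : ℝ, 0 < x → 0 < y → ∀ l : ℝ, 0 ≤ l → l ≤ 1 →
      g x ^ l * g y ^ (1 - l) ≤ g (l * x + (1 - l) * y))
    (L : ℝ → ℝ)
    (hL : ∀ p : ℝ, L p = ∫ ω, (η ω / p) ^ p) :
    (∀ a b l : ℝ, 0 < a → 0 < b → 0 ≤ l → l ≤ 1 →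
      L a ^ l * L b ^ (1 - l) ≤ L (l * a + (1 - l) * b)) ∧
    (∀ a b c : ℝ, 0 < c → c ≤ b → b ≤ a →
      L a ^ (b - c) * L c ^ (a - b) ≤ L b ^ (a - c)) :=
  reverse_lyapunov_power_normalized_general η hηm g hgnn hgm hgsupp hdens hlc L hL
end

section
/- Let ξ be a positive random variable whose distribution is log-concave of order p for some real p ≥ 1, i.e., ξ has density f(x) = x^{p−1}·g(x) on (0,∞) with g log-concave on (0,∞). Then Var(log ξ) ≤ ψ₁(p), where ψ₁(p) = (d²/dp²) log Γ(p) is the trigamma function. Moreover, equality is attained when ξ has the Gamma distribution with shape parameter p (density x^{p−1}e^{−x}/Γ(p) on (0,∞)). -/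
open MeasureTheory ProbabilityTheory

/-!
Write `f = x ^ (p - 1) * g` for the density of `ξ`, and let `γ` be the density of the gamma law of
shape `p` whose rate `r` gives `log` the same mean under `γ` as under `f`. On `(0, ∞)`,
`f / γ = g / (c * exp (-r x))` with `g` log-concave, so `f ≥ γ` exactly on an interval: along
`log x`, `f - γ` changes sign at most twice, in the pattern `-, +, -`. Since `f - γ` integrates
`1` and `log` to zero, its integrals against `log²` and against `(log - a) (log - b)` agree, and
for the endpoints `a`, `b` of that interval (in log scale) the latter is `≤ 0`. Hence
`Var_f log ≤ Var_γ log`, and the log-variance of a gamma law is `(log Γ)''(p)` whatever its rate,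
by differentiating `Γ(q) = ∫ t ^ (q - 1) e ^ (-t) dt` twice under the integral sign.
-/

open Real Set Filter Asymptotics
open scoped Topology

/-- The `k`-th derivative `Γ⁽ᵏ⁾(q)`, see `hasDerivAt_gammaLogMoment`. -/
noncomputable def gammaLogMoment (k : ℕ) (q : ℝ) : ℝ :=
  ∫ t in Ioi 0, t ^ (q - 1) * (log t ^ k * exp (-t))

/-- Complex-valued so that `mellin` applies: `mellin (logPowMulExpNeg k) q = gammaLogMoment k q`. -/
noncomputable def logPowMulExpNeg (k : ℕ) (t : ℝ) : ℂ := ((log t ^ k * exp (-t) : ℝ) : ℂ)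

lemma logPowMulExpNeg_succ (k : ℕ) :
    logPowMulExpNeg (k + 1) = fun t => log t • logPowMulExpNeg k t := by
  ext t
  simp only [logPowMulExpNeg, pow_succ, Complex.real_smul]
  push_cast
  ring

lemma locallyIntegrableOn_logPowMulExpNeg (k : ℕ) :
    LocallyIntegrableOn (logPowMulExpNeg k) (Ioi 0) := by
  refine ContinuousOn.locallyIntegrableOn ?_ measurableSet_Ioi
  refine Complex.continuous_ofReal.comp_continuousOn (ContinuousOn.mul ?_ (by fun_prop))
  exact (continuousOn_log.mono fun x hx => ne_of_gt hx).pow k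

lemma logPowMulExpNeg_isBigO_atTop (k : ℕ) (a : ℝ) :
    logPowMulExpNeg k =O[atTop] (· ^ (-a)) := by
  induction k generalizing a with
  | zero =>
    rw [← isBigO_norm_left]
    simpa only [logPowMulExpNeg, pow_zero, one_mul, Complex.norm_real, norm_eq_abs, abs_exp,
      neg_one_mul] using (isLittleO_exp_neg_mul_rpow_atTop zero_lt_one (-a)).isBigO
  | succ k ih =>
    rw [logPowMulExpNeg_succ]
    exact isBigO_rpow_top_log_smul (lt_add_one a) (ih (a + 1))

lemma logPowMulExpNeg_isBigO_nhdsGT (k : ℕ) {b : ℝ} (hb : 0 < b) :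
    logPowMulExpNeg k =O[𝓝[>] 0] (· ^ (-b)) := by
  induction k generalizing b with
  | zero =>
    refine IsBigO.of_bound 1 ?_
    filter_upwards [Ioo_mem_nhdsGT zero_lt_one] with t ht
    have hexp : exp (-t) ≤ 1 := exp_le_one_iff.mpr (by linarith [ht.1])
    have hpow : 1 ≤ t ^ (-b) := one_le_rpow_of_pos_of_le_one_of_nonpos ht.1 ht.2.le (by linarith)
    simp only [logPowMulExpNeg, pow_zero, one_mul, Complex.norm_real, norm_eq_abs, abs_exp,
      abs_of_pos (rpow_pos_of_pos ht.1 _)]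
    linarith
  | succ k ih =>
    rw [logPowMulExpNeg_succ]
    exact isBigO_rpow_zero_log_smul (half_lt_self hb) (ih (half_pos hb))

lemma mellinConvergent_logPowMulExpNeg (k : ℕ) {s : ℂ} (hs : 0 < s.re) :
    MellinConvergent (logPowMulExpNeg k) s :=
  mellinConvergent_of_isBigO_rpow (locallyIntegrableOn_logPowMulExpNeg k)
    (logPowMulExpNeg_isBigO_atTop k (s.re + 1)) (lt_add_one _)
    (logPowMulExpNeg_isBigO_nhdsGT k (half_pos hs)) (half_lt_self hs)

lemma hasDerivAt_mellin_logPowMulExpNeg (k : ℕ) {s : ℂ} (hs : 0 < s.re) :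
    HasDerivAt (mellin (logPowMulExpNeg k)) (mellin (logPowMulExpNeg (k + 1)) s) s := by
  rw [logPowMulExpNeg_succ]
  exact (mellin_hasDerivAt_of_isBigO_rpow (locallyIntegrableOn_logPowMulExpNeg k)
    (logPowMulExpNeg_isBigO_atTop k (s.re + 1)) (lt_add_one _)
    (logPowMulExpNeg_isBigO_nhdsGT k (half_pos hs)) (half_lt_self hs)).2

lemma cpow_smul_logPowMulExpNeg (k : ℕ) (q : ℝ) {t : ℝ} (ht : 0 < t) :
    (t : ℂ) ^ ((q : ℂ) - 1) • logPowMulExpNeg k t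
      = ((t ^ (q - 1) * (log t ^ k * exp (-t)) : ℝ) : ℂ) := by
  have hcpow : (t : ℂ) ^ ((q : ℂ) - 1) = ((t ^ (q - 1) : ℝ) : ℂ) := by
    rw [Complex.ofReal_cpow ht.le]
    push_cast
    rfl
  rw [logPowMulExpNeg, smul_eq_mul, hcpow, ← Complex.ofReal_mul]

lemma mellin_logPowMulExpNeg (k : ℕ) (q : ℝ) :
    mellin (logPowMulExpNeg k) q = gammaLogMoment k q := by
  rw [mellin, gammaLogMoment, ← integral_complex_ofReal]
  exact setIntegral_congr_fun measurableSet_Ioi fun t ht => cpow_smul_logPowMulExpNeg k q ht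

lemma integrableOn_gammaLogMoment (k : ℕ) {q : ℝ} (hq : 0 < q) :
    IntegrableOn (fun t => t ^ (q - 1) * (log t ^ k * exp (-t))) (Ioi 0) := by
  refine IntegrableOn.congr_fun
    (mellinConvergent_logPowMulExpNeg k (s := q) (by simpa using hq)).re (fun t ht => ?_)
    measurableSet_Ioi
  simp only [cpow_smul_logPowMulExpNeg k q ht, RCLike.re_to_complex, Complex.ofReal_re]

lemma hasDerivAt_gammaLogMoment (k : ℕ) {q : ℝ} (hq : 0 < q) :
    HasDerivAt (gammaLogMoment k) (gammaLogMoment (k + 1) q) q := by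
  have h := (hasDerivAt_mellin_logPowMulExpNeg k (s := q) (by simpa using hq)).real_of_complex
  simpa only [mellin_logPowMulExpNeg, Complex.ofReal_re] using h

lemma gammaLogMoment_zero {q : ℝ} (hq : 0 < q) : gammaLogMoment 0 q = Gamma q := by
  simp [gammaLogMoment, Gamma_eq_integral hq, mul_comm]

lemma hasDerivAt_Gamma_gammaLogMoment {q : ℝ} (hq : 0 < q) :
    HasDerivAt Gamma (gammaLogMoment 1 q) q :=
  (hasDerivAt_gammaLogMoment 0 hq).congr_of_eventuallyEq <|
    eventually_of_mem (Ioi_mem_nhds hq) fun _ hx => (gammaLogMoment_zero hx).symm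

lemma iteratedDeriv_two_log_Gamma {p : ℝ} (hp : 0 < p) :
    iteratedDeriv 2 (fun q => log (Gamma q)) p
      = gammaLogMoment 2 p / Gamma p - (gammaLogMoment 1 p / Gamma p) ^ 2 := by
  have hΓ : ∀ q, 0 < q → Gamma q ≠ 0 := fun q hq => (Gamma_pos_of_pos hq).ne'
  have hderiv : deriv (fun q => log (Gamma q)) =ᶠ[𝓝 p] fun q => gammaLogMoment 1 q / Gamma q :=
    eventually_of_mem (Ioi_mem_nhds hp) fun q hq =>
      ((hasDerivAt_Gamma_gammaLogMoment hq).log (hΓ q hq)).deriv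
  have hderiv2 : HasDerivAt (fun q => gammaLogMoment 1 q / Gamma q)
      ((gammaLogMoment 2 p * Gamma p - gammaLogMoment 1 p * gammaLogMoment 1 p) / Gamma p ^ 2) p :=
    (hasDerivAt_gammaLogMoment 1 hp).div (hasDerivAt_Gamma_gammaLogMoment hp) (hΓ p hp)
  rw [iteratedDeriv_succ, iteratedDeriv_one, hderiv.deriv_eq, hderiv2.deriv]
  field_simp

section Density

variable {α : Type*} [MeasurableSpace α] {ρ : Measure α} {f : α → ℝ}

lemma integral_withDensity_ofReal (hf : Measurable f) (hf0 : 0 ≤ f) (h : α → ℝ) :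
    ∫ x, h x ∂ρ.withDensity (fun x => ENNReal.ofReal (f x)) = ∫ x, f x * h x ∂ρ := by
  simp_rw [integral_withDensity_eq_integral_toReal_smul hf.ennreal_ofReal
    (ae_of_all _ fun _ => ENNReal.ofReal_lt_top), ENNReal.toReal_ofReal (hf0 _), smul_eq_mul]

lemma integrable_withDensity_ofReal_iff (hf : Measurable f) (hf0 : 0 ≤ f) {h : α → ℝ} :
    Integrable h (ρ.withDensity fun x => ENNReal.ofReal (f x)) ↔
      Integrable (fun x => f x * h x) ρ := by
  simp_rw [integrable_withDensity_iff_integrable_smul' hf.ennreal_ofReal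
    (ae_of_all _ fun _ => ENNReal.ofReal_lt_top), ENNReal.toReal_ofReal (hf0 _), smul_eq_mul]

variable [IsProbabilityMeasure (ρ.withDensity fun x => ENNReal.ofReal (f x))]

lemma integrable_of_isProbabilityMeasure_withDensity (hf : Measurable f) (hf0 : 0 ≤ f) :
    Integrable f ρ := by
  simpa using (integrable_withDensity_ofReal_iff hf hf0 (ρ := ρ)).1 (integrable_const (1 : ℝ))

lemma integral_eq_one_of_isProbabilityMeasure_withDensity (hf : Measurable f) (hf0 : 0 ≤ f) :
    ∫ x, f x ∂ρ = 1 := by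
  simpa using (integral_withDensity_ofReal hf hf0 (ρ := ρ) fun _ => 1).symm

lemma variance_withDensity_ofReal (hf : Measurable f) (hf0 : 0 ≤ f) {φ : α → ℝ}
    (hφ : MemLp φ 2 (ρ.withDensity fun x => ENNReal.ofReal (f x))) :
    Var[φ; ρ.withDensity fun x => ENNReal.ofReal (f x)]
      = ∫ x, f x * φ x ^ 2 ∂ρ - (∫ x, f x * φ x ∂ρ) ^ 2 := by
  rw [variance_eq_sub hφ, integral_withDensity_ofReal hf hf0, integral_withDensity_ofReal hf hf0]
  simp only [Pi.pow_apply]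

end Density

section SignChange

variable {α : Type*} [MeasurableSpace α] {μ : Measure α} {φ D : α → ℝ}

lemma integrable_mul_affine (hD : Integrable D μ) (hDφ : Integrable (fun x => D x * φ x) μ)
    (u v : ℝ) : Integrable (fun x => D x * (u * φ x + v)) μ :=
  ((hDφ.const_mul u).add (hD.mul_const v)).congr
    (ae_of_all _ fun x => by simp only [Pi.add_apply]; ring)

lemma integral_mul_affine_eq_zero (hD : Integrable D μ) (hDφ : Integrable (fun x => D x * φ x) μ)
    (hD0 : ∫ x, D x ∂μ = 0) (hDφ0 : ∫ x, D x * φ x ∂μ = 0) (u v : ℝ) :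
    ∫ x, D x * (u * φ x + v) ∂μ = 0 := by
  have hsplit : (fun x => D x * (u * φ x + v)) = fun x => u * (D x * φ x) + v * D x := by
    ext x; ring
  rw [hsplit, integral_add (hDφ.const_mul u) (hD.const_mul v), integral_const_mul,
    integral_const_mul, hD0, hDφ0, mul_zero, mul_zero, add_zero]

lemma ae_mul_affine_eq_zero (hD : Integrable D μ) (hDφ : Integrable (fun x => D x * φ x) μ)
    (hD0 : ∫ x, D x ∂μ = 0) (hDφ0 : ∫ x, D x * φ x ∂μ = 0) {u v : ℝ}
    (hsign : ∀ᵐ x ∂μ, 0 ≤ D x * (u * φ x + v)) :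
    ∀ᵐ x ∂μ, D x * (u * φ x + v) = 0 :=
  (integral_eq_zero_iff_of_nonneg_ae hsign (integrable_mul_affine hD hDφ u v)).1
    (integral_mul_affine_eq_zero hD hDφ hD0 hDφ0 u v)

lemma integral_mul_sq_nonpos_of_ae (hD : Integrable D μ) (hDφ : Integrable (fun x => D x * φ x) μ)
    (hD0 : ∫ x, D x ∂μ = 0) (hDφ0 : ∫ x, D x * φ x ∂μ = 0)
    (hDφ2 : Integrable (fun x => D x * φ x ^ 2) μ) (a b : ℝ)
    (hsign : ∀ᵐ x ∂μ, D x * ((φ x - a) * (φ x - b)) ≤ 0) :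
    ∫ x, D x * φ x ^ 2 ∂μ ≤ 0 := by
  have hsplit : (fun x => D x * ((φ x - a) * (φ x - b)))
      = fun x => D x * φ x ^ 2 + D x * (-(a + b) * φ x + a * b) := by
    ext x; ring
  have hval := integral_nonpos_of_ae hsign
  rwa [hsplit, integral_add hDφ2 (integrable_mul_affine hD hDφ _ _),
    integral_mul_affine_eq_zero hD hDφ hD0 hDφ0, add_zero] at hval

lemma integral_mul_sq_nonpos_of_ae_mul_affine_eq_zero (hD : Integrable D μ)
    (hDφ : Integrable (fun x => D x * φ x) μ)
    (hD0 : ∫ x, D x ∂μ = 0) (hDφ0 : ∫ x, D x * φ x ∂μ = 0)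
    (hDφ2 : Integrable (fun x => D x * φ x ^ 2) μ) {u : ℝ} (hu : u ≠ 0) (v : ℝ)
    (hzero : ∀ᵐ x ∂μ, D x * (u * φ x + v) = 0) :
    ∫ x, D x * φ x ^ 2 ∂μ ≤ 0 := by
  refine integral_mul_sq_nonpos_of_ae hD hDφ hD0 hDφ0 hDφ2 (-v / u) (-v / u) ?_
  filter_upwards [hzero] with x hx
  have : D x * (φ x - -v / u) = 0 := by
    field_simp
    linear_combination hx
  rw [← mul_assoc, this, zero_mul]

/-- `D (φ - inf J) (φ - sup J) ≤ 0`, and its integral is that of `D φ²`; when `J` is unbounded,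
the sign condition forces `D (φ - c) = 0` a.e. for an endpoint `c` instead. -/
theorem integral_mul_sq_nonpos_of_sign_change (hD : Integrable D μ)
    (hDφ : Integrable (fun x => D x * φ x) μ)
    (hD0 : ∫ x, D x ∂μ = 0) (hDφ0 : ∫ x, D x * φ x ∂μ = 0)
    (hDφ2 : Integrable (fun x => D x * φ x ^ 2) μ) {J : Set ℝ} (hJ : J.OrdConnected)
    (hin : ∀ᵐ x ∂μ, φ x ∈ J → 0 ≤ D x) (hout : ∀ᵐ x ∂μ, φ x ∉ J → D x ≤ 0) :
    ∫ x, D x * φ x ^ 2 ∂μ ≤ 0 := by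
  have hJ' : IsPreconnected J := isPreconnected_iff_ordConnected.mpr hJ
  rcases J.eq_empty_or_nonempty with rfl | hne
  · refine integral_mul_sq_nonpos_of_ae hD hDφ hD0 hDφ0 hDφ2 0 0 ?_
    filter_upwards [hout] with x hx
    exact mul_nonpos_of_nonpos_of_nonneg (hx (notMem_empty _)) (mul_self_nonneg _)
  by_cases hbelow : BddBelow J <;> by_cases habove : BddAbove J
  · set a := sInf J
    set b := sSup J
    refine integral_mul_sq_nonpos_of_ae hD hDφ hD0 hDφ0 hDφ2 a b ?_
    filter_upwards [hin, hout] with x hxin hxout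
    by_cases hx : φ x ∈ J
    · obtain ⟨hax, hxb⟩ := subset_Icc_csInf_csSup hbelow habove hx
      exact mul_nonpos_of_nonneg_of_nonpos (hxin hx)
        (mul_nonpos_of_nonneg_of_nonpos (sub_nonneg.2 hax) (sub_nonpos.2 hxb))
    · have hab : a ≤ b := csInf_le_csSup hne hbelow habove
      have hout' : φ x ≤ a ∨ b ≤ φ x := by
        by_contra! h
        exact hx (IsConnected.Ioo_csInf_csSup_subset ⟨hne, hJ'⟩ hbelow habove h)
      refine mul_nonpos_of_nonpos_of_nonneg (hxout hx) ?_
      rcases hout' with h | h <;> nlinarith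
  · refine integral_mul_sq_nonpos_of_ae_mul_affine_eq_zero hD hDφ hD0 hDφ0 hDφ2 one_ne_zero
      (-sInf J) (ae_mul_affine_eq_zero hD hDφ hD0 hDφ0 ?_)
    filter_upwards [hin, hout] with x hxin hxout
    by_cases hx : φ x ∈ J
    · exact mul_nonneg (hxin hx) (by linarith [csInf_le hbelow hx])
    · have : φ x ≤ sInf J := not_lt.1 fun h => hx (hJ'.Ioi_csInf_subset hbelow habove h)
      exact mul_nonneg_of_nonpos_of_nonpos (hxout hx) (by linarith)
  · refine integral_mul_sq_nonpos_of_ae_mul_affine_eq_zero hD hDφ hD0 hDφ0 hDφ2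
      (neg_ne_zero.2 one_ne_zero) (sSup J) (ae_mul_affine_eq_zero hD hDφ hD0 hDφ0 ?_)
    filter_upwards [hin, hout] with x hxin hxout
    by_cases hx : φ x ∈ J
    · exact mul_nonneg (hxin hx) (by linarith [le_csSup habove hx])
    · have : sSup J ≤ φ x := not_lt.1 fun h => hx (hJ'.Iio_csSup_subset hbelow habove h)
      exact mul_nonneg_of_nonpos_of_nonpos (hxout hx) (by linarith)
  · have hzero : ∀ᵐ x ∂μ, D x * (0 * φ x + 1) = 0 := by
      refine ae_mul_affine_eq_zero hD hDφ hD0 hDφ0 ?_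
      filter_upwards [hin] with x hx
      simpa [hJ'.eq_univ_of_unbounded hbelow habove] using hx
    refine integral_mul_sq_nonpos_of_ae hD hDφ hD0 hDφ0 hDφ2 0 0 ?_
    filter_upwards [hzero] with x hx
    rw [zero_mul, zero_add, mul_one] at hx
    rw [hx, zero_mul]

end SignChange

lemma integrableOn_rpow_mul_quadratic_log_mul_exp_neg {q : ℝ} (hq : 0 < q) (a b c : ℝ) :
    IntegrableOn (fun t => t ^ (q - 1) * ((a + b * log t + c * log t ^ 2) * exp (-t))) (Ioi 0) :=
  IntegrableOn.congr_fun (((integrableOn_gammaLogMoment 0 hq).const_mul a).fun_add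
    ((integrableOn_gammaLogMoment 1 hq).const_mul b) |>.fun_add
    ((integrableOn_gammaLogMoment 2 hq).const_mul c)) (fun t _ => by ring) measurableSet_Ioi

lemma integral_rpow_mul_quadratic_log_mul_exp_neg {q : ℝ} (hq : 0 < q) (a b c : ℝ) :
    ∫ t in Ioi 0, t ^ (q - 1) * ((a + b * log t + c * log t ^ 2) * exp (-t))
      = a * Gamma q + b * gammaLogMoment 1 q + c * gammaLogMoment 2 q := by
  have hsplit : (fun t => t ^ (q - 1) * ((a + b * log t + c * log t ^ 2) * exp (-t)))
      = fun t => (a * (t ^ (q - 1) * (log t ^ 0 * exp (-t)))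
          + b * (t ^ (q - 1) * (log t ^ 1 * exp (-t))))
          + c * (t ^ (q - 1) * (log t ^ 2 * exp (-t))) := by
    ext t; ring
  rw [hsplit, integral_add (((integrableOn_gammaLogMoment 0 hq).const_mul a).fun_add
      ((integrableOn_gammaLogMoment 1 hq).const_mul b))
      ((integrableOn_gammaLogMoment 2 hq).const_mul c),
    integral_add ((integrableOn_gammaLogMoment 0 hq).const_mul a)
      ((integrableOn_gammaLogMoment 1 hq).const_mul b),
    integral_const_mul, integral_const_mul, integral_const_mul, ← gammaLogMoment_zero hq]
  rfl

section GammaMeasure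

variable {p r : ℝ}

lemma gammaPDFReal_inv_mul (hr : 0 < r) {t : ℝ} (ht : 0 < t) :
    gammaPDFReal p r (r⁻¹ * t) = r * (Gamma p)⁻¹ * t ^ (p - 1) * exp (-t) := by
  have hrt : 0 ≤ r⁻¹ * t := by positivity
  rw [gammaPDFReal, if_pos hrt, mul_rpow (inv_nonneg.2 hr.le) ht.le, inv_rpow hr.le,
    rpow_sub_one hr.ne', mul_inv_cancel_left₀ hr.ne']
  field_simp

lemma gammaPDFReal_mul_comp_log_ae_eq (h : ℝ → ℝ) :
    (fun x => gammaPDFReal p r x * h (log x))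
      =ᵐ[volume] (Ioi 0).indicator fun x => gammaPDFReal p r x * h (log x) := by
  filter_upwards [volume.ae_ne 0] with x hx
  rcases hx.lt_or_gt with hx | hx
  · simp [gammaPDFReal, hx.not_ge, hx.not_gt]
  · simp [hx]

lemma eqOn_gammaPDFReal_inv_mul_mul_comp_log (hr : 0 < r) (h : ℝ → ℝ) :
    EqOn (fun t => gammaPDFReal p r (r⁻¹ * t) * h (log (r⁻¹ * t)))
      (fun t => r * (Gamma p)⁻¹ * (t ^ (p - 1) * (h (log t - log r) * exp (-t)))) (Ioi 0) := by
  intro t ht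
  simp only
  rw [gammaPDFReal_inv_mul hr ht, log_mul (inv_ne_zero hr.ne') ht.ne', log_inv]
  ring_nf

lemma integrable_gammaPDFReal_mul_comp_log_iff (hp : 0 < p) (hr : 0 < r) (h : ℝ → ℝ) :
    Integrable (fun x => gammaPDFReal p r x * h (log x))
      ↔ IntegrableOn (fun t => t ^ (p - 1) * (h (log t - log r) * exp (-t))) (Ioi 0) := by
  have hsubst := integrableOn_Ioi_comp_mul_left_iff
    (fun x => gammaPDFReal p r x * h (log x)) 0 (inv_pos.2 hr)
  rw [mul_zero] at hsubst
  rw [integrable_congr (gammaPDFReal_mul_comp_log_ae_eq h),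
    integrable_indicator_iff measurableSet_Ioi, ← hsubst,
    integrableOn_congr_fun (eqOn_gammaPDFReal_inv_mul_mul_comp_log hr h)
      measurableSet_Ioi, IntegrableOn, integrable_const_mul_iff
      (mul_ne_zero hr.ne' (inv_ne_zero (Gamma_pos_of_pos hp).ne')).isUnit]
  rfl

lemma integral_gammaPDFReal_mul_comp_log (hr : 0 < r) (h : ℝ → ℝ) :
    ∫ x, gammaPDFReal p r x * h (log x)
      = (Gamma p)⁻¹ * ∫ t in Ioi 0, t ^ (p - 1) * (h (log t - log r) * exp (-t)) := by
  have hsubst := integral_comp_mul_left_Ioi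
    (fun x => gammaPDFReal p r x * h (log x)) 0 (inv_pos.2 hr)
  rw [mul_zero, inv_inv, setIntegral_congr_fun measurableSet_Ioi
    (eqOn_gammaPDFReal_inv_mul_mul_comp_log hr h), integral_const_mul] at hsubst
  rw [integral_congr_ae (gammaPDFReal_mul_comp_log_ae_eq h),
    integral_indicator measurableSet_Ioi, ← mul_right_inj' hr.ne', ← smul_eq_mul, ← hsubst]
  ring

lemma gammaMeasure_eq_withDensity (p r : ℝ) :
    gammaMeasure p r = volume.withDensity fun x => ENNReal.ofReal (gammaPDFReal p r x) :=
  rfl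

lemma memLp_log_gammaMeasure (hp : 0 < p) (hr : 0 < r) : MemLp log 2 (gammaMeasure p r) := by
  rw [memLp_two_iff_integrable_sq measurable_log.aestronglyMeasurable, gammaMeasure_eq_withDensity,
    integrable_withDensity_ofReal_iff (measurable_gammaPDFReal p r) (gammaPDFReal_nonneg hp hr)]
  refine (integrable_gammaPDFReal_mul_comp_log_iff hp hr (· ^ 2)).2 ?_
  exact (integrableOn_rpow_mul_quadratic_log_mul_exp_neg hp (log r ^ 2) (-2 * log r) 1).congr_fun
    (fun t _ => by ring) measurableSet_Ioi

lemma integral_log_gammaMeasure (hp : 0 < p) (hr : 0 < r) :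
    ∫ x, log x ∂gammaMeasure p r = gammaLogMoment 1 p / Gamma p - log r := by
  have hsubst := integral_gammaPDFReal_mul_comp_log (p := p) hr fun u => u
  have hquad := integral_rpow_mul_quadratic_log_mul_exp_neg hp (-log r) 1 0
  rw [gammaMeasure_eq_withDensity,
    integral_withDensity_ofReal (measurable_gammaPDFReal p r) (gammaPDFReal_nonneg hp hr), hsubst]
  rw [show (fun t => t ^ (p - 1) * ((-log r + 1 * log t + 0 * log t ^ 2) * exp (-t)))
    = fun t => t ^ (p - 1) * ((log t - log r) * exp (-t)) by ext; ring] at hquad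
  rw [hquad]
  field_simp [(Gamma_pos_of_pos hp).ne']
  ring

theorem variance_log_gammaMeasure (hp : 0 < p) (hr : 0 < r) :
    Var[log; gammaMeasure p r] = iteratedDeriv 2 (fun q => log (Gamma q)) p := by
  set ψ := gammaLogMoment 1 p / Gamma p
  have hsubst := integral_gammaPDFReal_mul_comp_log (p := p) hr fun u => (u - (ψ - log r)) ^ 2
  have hquad := integral_rpow_mul_quadratic_log_mul_exp_neg hp (ψ ^ 2) (-2 * ψ) 1
  rw [variance_eq_integral measurable_log.aemeasurable, integral_log_gammaMeasure hp hr,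
    gammaMeasure_eq_withDensity,
    integral_withDensity_ofReal (measurable_gammaPDFReal p r) (gammaPDFReal_nonneg hp hr), hsubst]
  rw [show (fun t => t ^ (p - 1) * ((ψ ^ 2 + -2 * ψ * log t + 1 * log t ^ 2) * exp (-t)))
    = fun t => t ^ (p - 1) * ((log t - log r - (ψ - log r)) ^ 2 * exp (-t)) by ext; ring] at hquad
  rw [hquad, iteratedDeriv_two_log_Gamma hp]
  simp only [ψ]
  field_simp [(Gamma_pos_of_pos hp).ne']
  ring

end GammaMeasure

section Comparison

variable {α : Type*} [MeasurableSpace α] {ρ : Measure α} {f γ φ : α → ℝ}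

lemma integrable_mul_of_memLp_withDensity (hf : Measurable f) (hf0 : 0 ≤ f)
    [IsFiniteMeasure (ρ.withDensity fun x => ENNReal.ofReal (f x))]
    (hφ : MemLp φ 2 (ρ.withDensity fun x => ENNReal.ofReal (f x))) :
    Integrable (fun x => f x * φ x) ρ ∧ Integrable (fun x => f x * φ x ^ 2) ρ :=
  ⟨(integrable_withDensity_ofReal_iff hf hf0).1 (hφ.integrable one_le_two),
    (integrable_withDensity_ofReal_iff hf hf0).1 hφ.integrable_sq⟩

theorem variance_withDensity_le_of_sign_change (hfm : Measurable f) (hf0 : 0 ≤ f)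
    (hγm : Measurable γ) (hγ0 : 0 ≤ γ)
    [IsProbabilityMeasure (ρ.withDensity fun x => ENNReal.ofReal (f x))]
    [IsProbabilityMeasure (ρ.withDensity fun x => ENNReal.ofReal (γ x))]
    (hφf : MemLp φ 2 (ρ.withDensity fun x => ENNReal.ofReal (f x)))
    (hφγ : MemLp φ 2 (ρ.withDensity fun x => ENNReal.ofReal (γ x)))
    (hmean : ∫ x, φ x ∂ρ.withDensity (fun x => ENNReal.ofReal (f x))
      = ∫ x, φ x ∂ρ.withDensity (fun x => ENNReal.ofReal (γ x)))
    {J : Set ℝ} (hJ : J.OrdConnected)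
    (hin : ∀ᵐ x ∂ρ, φ x ∈ J → γ x ≤ f x) (hout : ∀ᵐ x ∂ρ, φ x ∉ J → f x ≤ γ x) :
    Var[φ; ρ.withDensity fun x => ENNReal.ofReal (f x)]
      ≤ Var[φ; ρ.withDensity fun x => ENNReal.ofReal (γ x)] := by
  rw [integral_withDensity_ofReal hfm hf0, integral_withDensity_ofReal hγm hγ0] at hmean
  obtain ⟨hfφ, hfφ2⟩ := integrable_mul_of_memLp_withDensity hfm hf0 hφf
  obtain ⟨hγφ, hγφ2⟩ := integrable_mul_of_memLp_withDensity hγm hγ0 hφγ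
  have hfi := integrable_of_isProbabilityMeasure_withDensity (ρ := ρ) hfm hf0
  have hγi := integrable_of_isProbabilityMeasure_withDensity (ρ := ρ) hγm hγ0
  have hsq := integral_mul_sq_nonpos_of_sign_change (D := fun x => f x - γ x) (hfi.sub' hγi)
    (by simpa only [sub_mul] using hfφ.sub' hγφ)
    (by rw [integral_sub hfi hγi,
      integral_eq_one_of_isProbabilityMeasure_withDensity (ρ := ρ) hfm hf0,
      integral_eq_one_of_isProbabilityMeasure_withDensity (ρ := ρ) hγm hγ0, sub_self])
    (by simp_rw [sub_mul]; rw [integral_sub hfφ hγφ, hmean, sub_self])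
    (by simpa only [sub_mul] using hfφ2.sub' hγφ2) hJ
    (hin.mono fun x hx h => sub_nonneg.2 (hx h)) (hout.mono fun x hx h => sub_nonpos.2 (hx h))
  simp_rw [sub_mul] at hsq
  rw [integral_sub hfφ2 hγφ2] at hsq
  rw [variance_withDensity_ofReal hfm hf0 hφf, variance_withDensity_ofReal hγm hγ0 hφγ, hmean]
  linarith

end Comparison

lemma ordConnected_setOf_exp_le {g : ℝ → ℝ}
    (hlc : ∀ x y : ℝ, 0 < x → 0 < y → ∀ l : ℝ, 0 ≤ l → l ≤ 1 →
      g x ^ l * g y ^ (1 - l) ≤ g (l * x + (1 - l) * y)) (a b : ℝ) :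
    {x | 0 < x ∧ exp (a * x + b) ≤ g x}.OrdConnected := by
  rw [← convex_iff_ordConnected]
  rintro x ⟨hx, hgx⟩ y ⟨hy, hgy⟩ l m hl hm hlm
  obtain rfl : m = 1 - l := by linarith
  refine ⟨convex_Ioi (0 : ℝ) hx hy hl hm hlm, ?_⟩
  calc exp (a * (l • x + (1 - l) • y) + b)
      = exp (a * x + b) ^ l * exp (a * y + b) ^ (1 - l) := by
        rw [← exp_mul, ← exp_mul, ← exp_add, smul_eq_mul, smul_eq_mul]
        ring_nf
    _ ≤ g x ^ l * g y ^ (1 - l) :=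
        mul_le_mul (rpow_le_rpow (exp_pos _).le hgx hl) (rpow_le_rpow (exp_pos _).le hgy hm)
          (rpow_nonneg (exp_pos _).le _) (rpow_nonneg ((exp_pos _).le.trans hgx) _)
    _ ≤ g (l • x + (1 - l) • y) := hlc x y hx hy l hl (by linarith)

lemma gammaPDFReal_eq_rpow_mul_exp {p r x : ℝ} (hp : 0 < p) (hr : 0 < r) (hx : 0 ≤ x) :
    gammaPDFReal p r x = x ^ (p - 1) * exp (-r * x + log (r ^ p / Gamma p)) := by
  rw [gammaPDFReal, if_pos hx, exp_add, exp_log (by have := Gamma_pos_of_pos hp; positivity)]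
  ring_nf

theorem variance_log_withDensity_le_trigamma {p : ℝ} (hp : 0 < p) {g : ℝ → ℝ}
    (hgnn : ∀ x, 0 < x → 0 ≤ g x) (hgm : Measurable g)
    (hlc : ∀ x y : ℝ, 0 < x → 0 < y → ∀ l : ℝ, 0 ≤ l → l ≤ 1 →
      g x ^ l * g y ^ (1 - l) ≤ g (l * x + (1 - l) * y))
    [IsProbabilityMeasure (volume.withDensity
      fun x => ENNReal.ofReal (if 0 < x then x ^ (p - 1) * g x else 0))] :
    Var[log; volume.withDensity fun x => ENNReal.ofReal (if 0 < x then x ^ (p - 1) * g x else 0)]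
      ≤ iteratedDeriv 2 (fun q => log (Gamma q)) p := by
  set f : ℝ → ℝ := fun x => if 0 < x then x ^ (p - 1) * g x else 0
  have hfm : Measurable f :=
    Measurable.ite measurableSet_Ioi ((measurable_id.pow_const _).mul hgm) measurable_const
  have hf0 : 0 ≤ f := fun x => by
    dsimp only [f]
    split_ifs with hx
    exacts [mul_nonneg (rpow_nonneg hx.le _) (hgnn x hx), le_rfl]
  by_cases hmem : MemLp log 2 (volume.withDensity fun x => ENNReal.ofReal (f x))
  swap
  · rw [variance_of_not_memLp measurable_log.aestronglyMeasurable hmem,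
      ← variance_log_gammaMeasure hp one_pos]
    exact variance_nonneg _ _
  set m := ∫ x, log x ∂(volume.withDensity fun x => ENNReal.ofReal (f x))
  -- the rate for which `log` has mean `m` under the gamma law too
  set r := exp (gammaLogMoment 1 p / Gamma p - m)
  have hr : 0 < r := exp_pos _
  have : IsProbabilityMeasure (volume.withDensity fun x => ENNReal.ofReal (gammaPDFReal p r x)) :=
    isProbabilityMeasure_gammaMeasure hp hr
  set T := {x : ℝ | 0 < x ∧ exp (-r * x + log (r ^ p / Gamma p)) ≤ g x}
  have hcross : ∀ x, 0 < x → (gammaPDFReal p r x ≤ f x ↔ log x ∈ exp ⁻¹' T) := fun x hx => by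
    simp only [f, T, if_pos hx, gammaPDFReal_eq_rpow_mul_exp hp hr hx.le, mem_preimage,
      exp_log hx, mem_ofPred_eq, true_and, hx, mul_le_mul_iff_right₀ (rpow_pos_of_pos hx _)]
  have hneg : ∀ x < 0, gammaPDFReal p r x = f x := fun x hx => by
    simp [f, gammaPDFReal, hx.not_ge, hx.not_gt]
  rw [← variance_log_gammaMeasure hp hr, gammaMeasure_eq_withDensity]
  refine variance_withDensity_le_of_sign_change hfm hf0 (measurable_gammaPDFReal p r)
    (gammaPDFReal_nonneg hp hr) hmem (memLp_log_gammaMeasure hp hr) ?_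
    ((ordConnected_setOf_exp_le hlc (-r) (log (r ^ p / Gamma p))).preimage_mono exp_monotone)
    ?_ ?_
  · rw [← gammaMeasure_eq_withDensity, integral_log_gammaMeasure hp hr, log_exp]
    ring
  · filter_upwards [volume.ae_ne 0] with x hx hxJ
    rcases hx.lt_or_gt with hx | hx
    exacts [(hneg x hx).le, (hcross x hx).2 hxJ]
  · filter_upwards [volume.ae_ne 0] with x hx hxJ
    rcases hx.lt_or_gt with hx | hx
    exacts [(hneg x hx).ge, le_of_not_ge fun h => hxJ ((hcross x hx).1 h)]

theorem order_p_log_variance_trigamma_general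
    {Ω : Type*} [MeasureSpace Ω] [IsProbabilityMeasure (ℙ : Measure Ω)]
    (ξ : Ω → ℝ) (hξm : Measurable ξ)
    (p : ℝ) (hp : 1 ≤ p)
    (g : ℝ → ℝ) (hgnn : ∀ x, 0 < x → 0 ≤ g x) (hgm : Measurable g)
    (hdens : Measure.map ξ ℙ = volume.withDensity
      (fun x => ENNReal.ofReal (if 0 < x then x ^ (p - 1) * g x else 0)))
    (hlc : ∀ x y : ℝ, 0 < x → 0 < y → ∀ l : ℝ, 0 ≤ l → l ≤ 1 →
      g x ^ l * g y ^ (1 - l) ≤ g (l * x + (1 - l) * y))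
    :
    variance (fun ω => Real.log (ξ ω)) ℙ
        ≤ iteratedDeriv 2 (fun q => Real.log (Real.Gamma q)) p ∧
      ((∀ x : ℝ, 0 < x → g x = Real.exp (-x) / Real.Gamma p) →
        variance (fun ω => Real.log (ξ ω)) ℙ
          = iteratedDeriv 2 (fun q => Real.log (Real.Gamma q)) p) := by
  have hp0 : 0 < p := zero_lt_one.trans_le hp
  have hvar : Var[fun ω => log (ξ ω); ℙ] = Var[log; Measure.map ξ ℙ] :=
    (variance_map measurable_log.aemeasurable hξm.aemeasurable).symm
  have := Measure.isProbabilityMeasure_map (μ := (ℙ : Measure Ω)) hξm.aemeasurable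
  rw [hdens] at this hvar
  rw [hvar]
  refine ⟨variance_log_withDensity_le_trigamma hp0 hgnn hgm hlc, fun hg => ?_⟩
  rw [← variance_log_gammaMeasure hp0 one_pos, gammaMeasure_eq_withDensity]
  congr 1
  refine withDensity_congr_ae ?_
  filter_upwards [volume.ae_ne 0] with x hx
  rcases hx.lt_or_gt with hx | hx
  · simp [gammaPDFReal, hx.not_ge, hx.not_gt]
  · rw [if_pos hx, hg x hx, gammaPDFReal, if_pos hx.le, one_rpow, one_mul]
    ring_nf

theorem order_p_log_variance_trigamma
    {Ω : Type*} [MeasureSpace Ω] [IsProbabilityMeasure (ℙ : Measure Ω)]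
    (ξ : Ω → ℝ) (hξm : Measurable ξ) (hξpos : ∀ ω, 0 < ξ ω)
    (p : ℝ) (hp : 1 ≤ p)
    (g : ℝ → ℝ) (hgnn : ∀ x, 0 < x → 0 ≤ g x) (hgm : Measurable g)
    (hdens : Measure.map ξ ℙ = volume.withDensity
      (fun x => ENNReal.ofReal (if 0 < x then x ^ (p - 1) * g x else 0)))
    (hlc : ∀ x y : ℝ, 0 < x → 0 < y → ∀ l : ℝ, 0 ≤ l → l ≤ 1 →
      g x ^ l * g y ^ (1 - l) ≤ g (l * x + (1 - l) * y))
    :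
    variance (fun ω => Real.log (ξ ω)) ℙ
        ≤ iteratedDeriv 2 (fun q => Real.log (Real.Gamma q)) p ∧
      ((∀ x : ℝ, 0 < x → g x = Real.exp (-x) / Real.Gamma p) →
        variance (fun ω => Real.log (ξ ω)) ℙ
          = iteratedDeriv 2 (fun q => Real.log (Real.Gamma q)) p) :=
  order_p_log_variance_trigamma_general ξ hξm p hp g hgnn hgm hdens hlc
end

section
/- Let ξ be a positive random variable whose distribution is log-concave of order p for some real p > 1, i.e., ξ has density f(x) = x^{p−1}·g(x) on (0,∞) with g log-concave on (0,∞). Then for every α with 0 ≤ α ≤ p−1, E[ exp( α·|log ξ − E[log ξ]| ) ] ≤ 2·e^{2α²/(p−1)}. -/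
/-!
Write `s = p - 1`. The one-dimensional Prékopa–Leindler inequality, `∫ F · ∫ G ≤ (∫ H) ^ 2`
whenever `F x · G y ≤ H ((x + y) / 2) ^ 2`, follows from the one-dimensional Brunn–Minkowski
inequality `|A| + |B| ≤ |A + B|` by the layer-cake formula. Applied to `F = x ^ (s + α) g x`,
`G = x ^ (s - α) g x` and `H = e ^ (α² / s) x ^ s g x` on `(0, ∞)`, whose pointwise hypothesis is
midpoint log-concavity of `g` together with
`x ^ (s + α) y ^ (s - α) ≤ e ^ (2α² / s) ((x + y) / 2) ^ (2s)`, it gives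
`E ξ ^ α · E ξ ^ (-α) ≤ e ^ (2α² / s)`. By Jensen, `e ^ (± α E log ξ) ≤ E ξ ^ (± α)`, so both
`E e ^ (± α (log ξ - E log ξ))` are at most this product, and
`e ^ (α |u|) ≤ e ^ (α u) + e ^ (-α u)`.
-/

open MeasureTheory ProbabilityTheory Set Pointwise Real
open scoped ENNReal

theorem lintegral_ofReal_const_mul {α : Type*} [MeasurableSpace α] {μ : Measure α} {c : ℝ}
    (hc : 0 ≤ c) (φ : α → ℝ) :
    ∫⁻ x, ENNReal.ofReal (c * φ x) ∂μ = ENNReal.ofReal c * ∫⁻ x, ENNReal.ofReal (φ x) ∂μ := by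
  simp_rw [ENNReal.ofReal_mul hc]
  exact lintegral_const_mul' _ _ ENNReal.ofReal_ne_top

theorem lintegral_ofReal_eq_iSup_min {α : Type*} [MeasurableSpace α] {μ : Measure α}
    {φ : α → ℝ} (hφ : Measurable φ) :
    ∫⁻ x, ENNReal.ofReal (φ x) ∂μ = ⨆ n : ℕ, ∫⁻ x, ENNReal.ofReal (min (φ x) n) ∂μ := by
  rw [← lintegral_iSup (fun n ↦ (hφ.min measurable_const).ennreal_ofReal)
    fun m n hmn x ↦ ENNReal.ofReal_le_ofReal (min_le_min_left _ (Nat.cast_le.mpr hmn))]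
  refine lintegral_congr fun x ↦ le_antisymm ?_ <|
    iSup_le fun n ↦ ENNReal.ofReal_le_ofReal (min_le_left _ _)
  exact le_iSup_of_le ⌈φ x⌉₊ (by rw [min_eq_left (Nat.le_ceil _)])

theorem lintegral_add_lintegral_le_two_mul_lintegral_of_measure_lt {α : Type*}
    [MeasurableSpace α] {μ : Measure α} {f g h : α → ℝ} (hf : Measurable f) (hg : Measurable g)
    (hh : Measurable h) (hf₀ : 0 ≤ f) (hg₀ : 0 ≤ g) (hh₀ : 0 ≤ h)
    (hlevel : ∀ t, 0 < t → μ {x | t < f x} + μ {x | t < g x} ≤ 2 * μ {x | t < h x}) :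
    ∫⁻ x, ENNReal.ofReal (f x) ∂μ + ∫⁻ x, ENNReal.ofReal (g x) ∂μ
      ≤ 2 * ∫⁻ x, ENNReal.ofReal (h x) ∂μ := by
  rw [lintegral_eq_lintegral_meas_lt μ (.of_forall hf₀) hf.aemeasurable,
    lintegral_eq_lintegral_meas_lt μ (.of_forall hg₀) hg.aemeasurable,
    lintegral_eq_lintegral_meas_lt μ (.of_forall hh₀) hh.aemeasurable,
    ← lintegral_const_mul' _ _ ENNReal.ofNat_ne_top]
  exact (le_lintegral_add _ _).trans (setLIntegral_mono' measurableSet_Ioi hlevel)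

theorem ENNReal.four_mul_le_sq_add (a b : ℝ≥0∞) : 4 * a * b ≤ (a + b) ^ 2 := by
  rcases eq_or_ne a ⊤ with rfl | ha
  · rcases eq_or_ne b 0 with rfl | hb <;> simp [*]
  rcases eq_or_ne b ⊤ with rfl | hb
  · rcases eq_or_ne a 0 with rfl | ha' <;> simp [*]
  lift a to NNReal using ha
  lift b to NNReal using hb
  exact_mod_cast _root_.four_mul_le_sq_add a b

theorem volume_add_volume_le_volume_add_of_isCompact {K L : Set ℝ} (hK : IsCompact K)
    (hL : IsCompact L) (hK₀ : K.Nonempty) (hL₀ : L.Nonempty) :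
    volume K + volume L ≤ volume (K + L) := by
  obtain ⟨a, haK, ha⟩ := hK.exists_isGreatest hK₀
  obtain ⟨b, hbL, hb⟩ := hL.exists_isLeast hL₀
  have hsub : (b +ᵥ K) ∪ (a +ᵥ L) ⊆ K + L := by
    rintro _ (⟨k, hk, rfl⟩ | ⟨l, hl, rfl⟩)
    · show b + k ∈ K + L
      rw [add_comm b k]
      exact add_mem_add hk hbL
    · exact add_mem_add haK hl
  have hinter : (b +ᵥ K) ∩ (a +ᵥ L) ⊆ {a + b} := by
    rintro _ ⟨⟨k, hk, rfl⟩, l, hl, hkl⟩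
    have := ha hk
    have := hb hl
    simp only [vadd_eq_add, mem_singleton_iff] at hkl ⊢
    linarith
  calc volume K + volume L = volume (b +ᵥ K) + volume (a +ᵥ L) := by
        rw [measure_vadd, measure_vadd]
    _ = volume ((b +ᵥ K) ∪ (a +ᵥ L)) + volume ((b +ᵥ K) ∩ (a +ᵥ L)) :=
        (measure_union_add_inter _ (hL.vadd a).isClosed.measurableSet).symm
    _ ≤ volume (K + L) + 0 :=
        add_le_add (measure_mono hsub) (measure_mono_null hinter (measure_singleton _)).le
    _ = volume (K + L) := add_zero _

theorem volume_add_volume_le_volume_add {A B : Set ℝ} (hA : MeasurableSet A)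
    (hB : MeasurableSet B) (hA₀ : A.Nonempty) (hB₀ : B.Nonempty) :
    volume A + volume B ≤ volume (A + B) := by
  obtain ⟨x, hx⟩ := hA₀
  obtain ⟨y, hy⟩ := hB₀
  rw [hA.measure_eq_iSup_isCompact, hB.measure_eq_iSup_isCompact]
  simp_rw [iSup_and']
  refine ENNReal.biSup_add_biSup_le' ⟨∅, empty_subset _, isCompact_empty⟩
    ⟨∅, empty_subset _, isCompact_empty⟩ ?_
  rintro K ⟨hKA, hK⟩ L ⟨hLB, hL⟩
  calc volume K + volume L ≤ volume (insert x K) + volume (insert y L) :=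
        add_le_add (measure_mono (subset_insert _ _)) (measure_mono (subset_insert _ _))
    _ ≤ volume (insert x K + insert y L) :=
        volume_add_volume_le_volume_add_of_isCompact (hK.insert x) (hL.insert y)
          (insert_nonempty _ _) (insert_nonempty _ _)
    _ ≤ volume (A + B) :=
        measure_mono (add_subset_add (insert_subset hx hKA) (insert_subset hy hLB))

theorem volume_add_volume_le_two_mul_volume_of_midpoint_mem {A B C : Set ℝ}
    (hA : MeasurableSet A) (hB : MeasurableSet B) (hA₀ : A.Nonempty) (hB₀ : B.Nonempty)
    (hC : ∀ x ∈ A, ∀ y ∈ B, (x + y) / 2 ∈ C) : volume A + volume B ≤ 2 * volume C := by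
  have hsub : (2⁻¹ : ℝ) • (A + B) ⊆ C := by
    rintro _ ⟨_, ⟨x, hx, y, hy, rfl⟩, rfl⟩
    simpa [div_eq_inv_mul] using hC x hx y hy
  calc volume A + volume B ≤ volume (A + B) := volume_add_volume_le_volume_add hA hB hA₀ hB₀
    _ = 2 * volume ((2⁻¹ : ℝ) • (A + B)) := by
        rw [Measure.addHaar_smul, Module.finrank_self, pow_one, abs_of_pos (by norm_num),
          ENNReal.ofReal_inv_of_pos two_pos, ENNReal.ofReal_ofNat, ← mul_assoc,
          ENNReal.mul_inv_cancel two_ne_zero ENNReal.ofNat_ne_top, one_mul]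
    _ ≤ 2 * volume C := by gcongr

section PrekopaLeindler

variable {f g h : ℝ → ℝ}

theorem lintegral_mul_lintegral_le_sq_lintegral_of_le_one (hf : Measurable f)
    (hg : Measurable g) (hh : Measurable h) (hf₀ : 0 ≤ f) (hg₀ : 0 ≤ g) (hh₀ : 0 ≤ h)
    (hf₁ : ∀ x, f x ≤ 1) (hg₁ : ∀ x, g x ≤ 1) (hf_sup : ∀ t < 1, ∃ x, t < f x)
    (hg_sup : ∀ t < 1, ∃ x, t < g x) (hfgh : ∀ x y, f x * g y ≤ h ((x + y) / 2) ^ 2) :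
    (∫⁻ x, ENNReal.ofReal (f x)) * ∫⁻ x, ENNReal.ofReal (g x)
      ≤ (∫⁻ x, ENNReal.ofReal (h x)) ^ 2 := by
  -- For `t < 1` both superlevel sets are nonempty, and their midpoints lie in `{t < h}`.
  have hlevel : ∀ t, 0 < t →
      volume {x | t < f x} + volume {x | t < g x} ≤ 2 * volume {x | t < h x} := by
    intro t ht
    rcases lt_or_ge t 1 with ht₁ | ht₁
    · obtain ⟨x₀, hx₀⟩ := hf_sup t ht₁
      obtain ⟨y₀, hy₀⟩ := hg_sup t ht₁
      refine volume_add_volume_le_two_mul_volume_of_midpoint_mem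
        (measurableSet_lt measurable_const hf) (measurableSet_lt measurable_const hg)
        ⟨x₀, hx₀⟩ ⟨y₀, hy₀⟩ fun x hx y hy ↦ ?_
      by_contra hxy
      have hlt : t * t < h ((x + y) / 2) ^ 2 :=
        (mul_lt_mul'' hx hy ht.le ht.le).trans_le (hfgh x y)
      have hle := mul_self_le_mul_self (hh₀ _) (not_lt.mp hxy)
      linarith [sq (h ((x + y) / 2))]
    · have hf_empty : {x | t < f x} = ∅ := eq_empty_of_forall_notMem fun x hx ↦
        (hf₁ x).not_gt (ht₁.trans_lt hx)
      have hg_empty : {x | t < g x} = ∅ := eq_empty_of_forall_notMem fun x hx ↦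
        (hg₁ x).not_gt (ht₁.trans_lt hx)
      simp [hf_empty, hg_empty]
  have hsum := lintegral_add_lintegral_le_two_mul_lintegral_of_measure_lt hf hg hh hf₀ hg₀ hh₀
    hlevel
  calc (∫⁻ x, ENNReal.ofReal (f x)) * ∫⁻ x, ENNReal.ofReal (g x)
      = 4⁻¹ * (4 * (∫⁻ x, ENNReal.ofReal (f x)) * ∫⁻ x, ENNReal.ofReal (g x)) := by
        rw [mul_assoc, ← mul_assoc 4⁻¹, ENNReal.inv_mul_cancel (by norm_num) (by norm_num),
          one_mul]
    _ ≤ 4⁻¹ * (2 * ∫⁻ x, ENNReal.ofReal (h x)) ^ 2 := by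
        gcongr
        exact (ENNReal.four_mul_le_sq_add _ _).trans (by gcongr)
    _ = (∫⁻ x, ENNReal.ofReal (h x)) ^ 2 := by
        rw [mul_pow, ← mul_assoc]
        norm_num [ENNReal.inv_mul_cancel]

theorem lintegral_mul_lintegral_le_sq_lintegral_of_bddAbove (hf : Measurable f)
    (hg : Measurable g) (hh : Measurable h) (hf₀ : 0 ≤ f) (hg₀ : 0 ≤ g) (hh₀ : 0 ≤ h)
    (hf_bdd : BddAbove (range f)) (hg_bdd : BddAbove (range g))
    (hfgh : ∀ x y, f x * g y ≤ h ((x + y) / 2) ^ 2) :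
    (∫⁻ x, ENNReal.ofReal (f x)) * ∫⁻ x, ENNReal.ofReal (g x)
      ≤ (∫⁻ x, ENNReal.ofReal (h x)) ^ 2 := by
  set a := ⨆ x, f x
  set b := ⨆ x, g x
  rcases (Real.iSup_nonneg hf₀).eq_or_lt with ha | ha
  · have : f = 0 := funext fun x ↦ le_antisymm ((le_ciSup hf_bdd x).trans ha.ge) (hf₀ x)
    simp [this]
  rcases (Real.iSup_nonneg hg₀).eq_or_lt with hb | hb
  · have : g = 0 := funext fun x ↦ le_antisymm ((le_ciSup hg_bdd x).trans hb.ge) (hg₀ x)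
    simp [this]
  set c := √(a * b)
  have hc : 0 < c := Real.sqrt_pos.mpr (mul_pos ha hb)
  have hsup {φ : ℝ → ℝ} {d : ℝ} (hd : 0 < d) (hφ : d = ⨆ x, φ x) (t : ℝ) (ht : t < 1) :
      ∃ x, t < d⁻¹ * φ x := by
    obtain ⟨x, hx⟩ := exists_lt_of_lt_ciSup (hφ ▸ (mul_lt_iff_lt_one_left hd).mpr ht :
      t * d < ⨆ x, φ x)
    exact ⟨x, by rwa [lt_inv_mul_iff₀ hd, mul_comm]⟩
  have hscaled := lintegral_mul_lintegral_le_sq_lintegral_of_le_one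
    (hf.const_mul a⁻¹) (hg.const_mul b⁻¹) (hh.const_mul c⁻¹)
    (fun x ↦ mul_nonneg (inv_nonneg.2 ha.le) (hf₀ x))
    (fun x ↦ mul_nonneg (inv_nonneg.2 hb.le) (hg₀ x))
    (fun x ↦ mul_nonneg (inv_nonneg.2 hc.le) (hh₀ x))
    (fun x ↦ (inv_mul_le_one₀ ha).mpr (le_ciSup hf_bdd x))
    (fun x ↦ (inv_mul_le_one₀ hb).mpr (le_ciSup hg_bdd x))
    (hsup ha rfl) (hsup hb rfl) fun x y ↦ by
      rw [mul_pow, inv_pow, Real.sq_sqrt (mul_pos ha hb).le, mul_inv, mul_mul_mul_comm]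
      exact mul_le_mul_of_nonneg_left (hfgh x y) (by positivity)
  rw [lintegral_ofReal_const_mul (inv_nonneg.2 ha.le), lintegral_ofReal_const_mul
    (inv_nonneg.2 hb.le), lintegral_ofReal_const_mul (inv_nonneg.2 hc.le)] at hscaled
  have hk : ENNReal.ofReal a⁻¹ * ENNReal.ofReal b⁻¹ = ENNReal.ofReal c⁻¹ ^ 2 := by
    rw [← ENNReal.ofReal_mul (inv_nonneg.2 ha.le), ← ENNReal.ofReal_pow (inv_nonneg.2 hc.le),
      inv_pow, Real.sq_sqrt (mul_pos ha hb).le, mul_inv]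
  rw [mul_mul_mul_comm, hk, mul_pow] at hscaled
  exact (ENNReal.mul_le_mul_iff_right (by simpa using hc) (by simp)).mp hscaled

theorem lintegral_mul_lintegral_le_sq_lintegral (hf : Measurable f) (hg : Measurable g)
    (hh : Measurable h) (hf₀ : 0 ≤ f) (hg₀ : 0 ≤ g) (hh₀ : 0 ≤ h)
    (hfgh : ∀ x y, f x * g y ≤ h ((x + y) / 2) ^ 2) :
    (∫⁻ x, ENNReal.ofReal (f x)) * ∫⁻ x, ENNReal.ofReal (g x)
      ≤ (∫⁻ x, ENNReal.ofReal (h x)) ^ 2 := by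
  rw [lintegral_ofReal_eq_iSup_min hf, lintegral_ofReal_eq_iSup_min hg, ENNReal.iSup_mul]
  refine iSup_le fun m ↦ ?_
  rw [ENNReal.mul_iSup]
  refine iSup_le fun n ↦ lintegral_mul_lintegral_le_sq_lintegral_of_bddAbove
    (hf.min measurable_const) (hg.min measurable_const) hh
    (fun x ↦ le_min (hf₀ x) m.cast_nonneg) (fun x ↦ le_min (hg₀ x) n.cast_nonneg) hh₀
    ⟨m, forall_mem_range.2 fun x ↦ min_le_right _ _⟩
    ⟨n, forall_mem_range.2 fun x ↦ min_le_right _ _⟩ fun x y ↦ ?_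
  exact (mul_le_mul (min_le_left _ _) (min_le_left _ _) (le_min (hg₀ y) n.cast_nonneg)
    (hf₀ x)).trans (hfgh x y)

end PrekopaLeindler

theorem mul_log_le_add_sq_sub {c w : ℝ} (hc : 0 ≤ c) (hw : 0 < w) :
    c * log w ≤ w + c ^ 2 - 2 * c := by
  rcases hc.eq_or_lt with rfl | hc
  · simpa using hw.le
  calc c * log w = c * log (w / c) + c * log c := by rw [log_div hw.ne' hc.ne']; ring
    _ ≤ c * (w / c - 1) + c * (c - 1) := by
        gcongr <;> exact log_le_sub_one_of_pos (by positivity)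
    _ = w + c ^ 2 - 2 * c := by field_simp; ring

theorem rpow_add_mul_rpow_sub_le {s α x y : ℝ} (hs : 0 < s) (hα : |α| ≤ s) (hx : 0 < x)
    (hy : 0 < y) :
    x ^ (s + α) * y ^ (s - α) ≤ exp (2 * α ^ 2 / s) * ((x + y) / 2) ^ (2 * s) := by
  set m := (x + y) / 2
  have hm : 0 < m := by positivity
  obtain ⟨hα₁, hα₂⟩ := abs_le.mp hα
  -- tangent-line bounds at the maximiser `x / m = (s + α) / s`, `y / m = (s - α) / s`
  have hx' := mul_log_le_add_sq_sub (c := (s + α) / s) (div_nonneg (by linarith) hs.le)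
    (div_pos hx hm)
  have hy' := mul_log_le_add_sq_sub (c := (s - α) / s) (div_nonneg (by linarith) hs.le)
    (div_pos hy hm)
  have key : (s + α) * log (x / m) + (s - α) * log (y / m) ≤ 2 * α ^ 2 / s := by
    have hxy : y / m = 2 - x / m := by field_simp; ring
    calc (s + α) * log (x / m) + (s - α) * log (y / m)
        = s * ((s + α) / s * log (x / m) + (s - α) / s * log (y / m)) := by field_simp
      _ ≤ s * (x / m + ((s + α) / s) ^ 2 - 2 * ((s + α) / s)
            + (y / m + ((s - α) / s) ^ 2 - 2 * ((s - α) / s))) :=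
          mul_le_mul_of_nonneg_left (add_le_add hx' hy') hs.le
      _ = 2 * α ^ 2 / s := by rw [hxy]; field_simp; ring
  rw [log_div hx.ne' hm.ne', log_div hy.ne' hm.ne'] at key
  rw [← log_le_log_iff (by positivity) (by positivity), log_mul (by positivity) (by positivity),
    log_mul (by positivity) (by positivity), log_exp, log_rpow hx, log_rpow hy, log_rpow hm]
  linarith

theorem mul_le_sq_midpoint_of_rpow_mul_rpow_le {g : ℝ → ℝ} (hg₀ : ∀ x, 0 < x → 0 ≤ g x)
    (hlc : ∀ x y : ℝ, 0 < x → 0 < y → ∀ l : ℝ, 0 ≤ l → l ≤ 1 →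
      g x ^ l * g y ^ (1 - l) ≤ g (l * x + (1 - l) * y))
    {x y : ℝ} (hx : 0 < x) (hy : 0 < y) : g x * g y ≤ g ((x + y) / 2) ^ 2 := by
  have h := hlc x y hx hy (1 / 2) (by norm_num) (by norm_num)
  rw [show (1 : ℝ) - 1 / 2 = 1 / 2 by norm_num, ← sqrt_eq_rpow, ← sqrt_eq_rpow,
    show 1 / 2 * x + 1 / 2 * y = (x + y) / 2 by ring] at h
  calc g x * g y = (√(g x) * √(g y)) ^ 2 := by
        rw [mul_pow, sq_sqrt (hg₀ x hx), sq_sqrt (hg₀ y hy)]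
    _ ≤ g ((x + y) / 2) ^ 2 := by gcongr

noncomputable def powWeight (s : ℝ) (g : ℝ → ℝ) (x : ℝ) : ℝ := if 0 < x then x ^ s * g x else 0

section powWeight

variable {s : ℝ} {g : ℝ → ℝ}

theorem powWeight_nonneg (hg₀ : ∀ x, 0 < x → 0 ≤ g x) (s : ℝ) : 0 ≤ powWeight s g := by
  intro x
  unfold powWeight
  split_ifs with hx
  exacts [mul_nonneg (rpow_nonneg hx.le s) (hg₀ x hx), le_rfl]

theorem measurable_powWeight (hg : Measurable g) (s : ℝ) : Measurable (powWeight s g) :=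
  Measurable.ite measurableSet_Ioi (by fun_prop) measurable_const

theorem powWeight_mul_powWeight_le {α : ℝ} (hs : 0 < s) (hα : |α| ≤ s)
    (hg₀ : ∀ x, 0 < x → 0 ≤ g x) (hg : ∀ x y, 0 < x → 0 < y → g x * g y ≤ g ((x + y) / 2) ^ 2)
    (x y : ℝ) :
    powWeight (s + α) g x * powWeight (s - α) g y
      ≤ (exp (α ^ 2 / s) * powWeight s g ((x + y) / 2)) ^ 2 := by
  by_cases hx : 0 < x
  swap
  · simp only [powWeight, hx, if_false, zero_mul]; positivity
  by_cases hy : 0 < y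
  swap
  · simp only [powWeight, hy, if_false, mul_zero]; positivity
  have hm : 0 < (x + y) / 2 := by positivity
  simp only [powWeight, hx, hy, hm, if_true]
  calc x ^ (s + α) * g x * (y ^ (s - α) * g y) = x ^ (s + α) * y ^ (s - α) * (g x * g y) := by
        ring
    _ ≤ exp (2 * α ^ 2 / s) * ((x + y) / 2) ^ (2 * s) * g ((x + y) / 2) ^ 2 :=
        mul_le_mul (rpow_add_mul_rpow_sub_le hs hα hx hy) (hg x y hx hy)
          (mul_nonneg (hg₀ x hx) (hg₀ y hy)) (by positivity)
    _ = (exp (α ^ 2 / s) * (((x + y) / 2) ^ s * g ((x + y) / 2))) ^ 2 := by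
        rw [mul_pow, mul_pow, ← exp_nat_mul, ← rpow_mul_natCast hm.le, mul_comm s]
        ring_nf

theorem lintegral_powWeight_mul_lintegral_powWeight_le {α : ℝ} (hs : 0 < s) (hα : |α| ≤ s)
    (hgm : Measurable g) (hg₀ : ∀ x, 0 < x → 0 ≤ g x)
    (hg : ∀ x y, 0 < x → 0 < y → g x * g y ≤ g ((x + y) / 2) ^ 2) :
    (∫⁻ x, ENNReal.ofReal (powWeight (s + α) g x)) * ∫⁻ x, ENNReal.ofReal (powWeight (s - α) g x)
      ≤ ENNReal.ofReal (exp (2 * α ^ 2 / s)) * (∫⁻ x, ENNReal.ofReal (powWeight s g x)) ^ 2 := by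
  have h := lintegral_mul_lintegral_le_sq_lintegral (measurable_powWeight hgm _)
    (measurable_powWeight hgm _) ((measurable_powWeight hgm s).const_mul (exp (α ^ 2 / s)))
    (powWeight_nonneg hg₀ _) (powWeight_nonneg hg₀ _)
    (fun x ↦ mul_nonneg (exp_pos _).le (powWeight_nonneg hg₀ s x))
    (powWeight_mul_powWeight_le hs hα hg₀ hg)
  rwa [lintegral_ofReal_const_mul (exp_pos _).le, mul_pow, ← ENNReal.ofReal_pow (exp_pos _).le,
    ← exp_nat_mul, Nat.cast_ofNat, ← mul_div_assoc] at h

theorem lintegral_exp_mul_log_eq_lintegral_powWeight {Ω : Type*} [MeasurableSpace Ω]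
    {μ : Measure Ω} {ξ : Ω → ℝ} (hξ : Measurable ξ) (hgm : Measurable g)
    (hg₀ : ∀ x, 0 < x → 0 ≤ g x)
    (hlaw : μ.map ξ = volume.withDensity fun x ↦ ENNReal.ofReal (powWeight s g x)) (β : ℝ) :
    ∫⁻ ω, ENNReal.ofReal (exp (β * log (ξ ω))) ∂μ
      = ∫⁻ x, ENNReal.ofReal (powWeight (s + β) g x) := by
  have hmeas : Measurable fun x ↦ ENNReal.ofReal (exp (β * log x)) := by fun_prop
  rw [← lintegral_map hmeas hξ, hlaw,
    lintegral_withDensity_eq_lintegral_mul _ (measurable_powWeight hgm s).ennreal_ofReal hmeas]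
  refine lintegral_congr fun x ↦ ?_
  simp only [Pi.mul_apply, ← ENNReal.ofReal_mul (powWeight_nonneg hg₀ s x)]
  congr 1
  unfold powWeight
  split_ifs with hx
  · rw [rpow_add hx, mul_comm β, ← rpow_def_of_pos hx]; ring
  · rw [zero_mul]

end powWeight

section Probability

variable {Ω : Type*} [MeasurableSpace Ω] {μ : Measure Ω} {X : Ω → ℝ} {t : ℝ}

theorem exp_mul_integral_le_mgf [IsProbabilityMeasure μ] (hX : Integrable X μ)
    (ht : Integrable (fun ω ↦ exp (t * X ω)) μ) : exp (t * ∫ ω, X ω ∂μ) ≤ mgf X μ t := by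
  rw [← integral_const_mul]
  exact convexOn_exp.map_integral_le continuous_exp.continuousOn isClosed_univ
    (.of_forall fun _ ↦ mem_univ _) (hX.const_mul t) ht

theorem integral_exp_mul_abs_sub_integral_le [IsProbabilityMeasure μ]
    (hpos : Integrable (fun ω ↦ exp (t * X ω)) μ) (hneg : Integrable (fun ω ↦ exp (-t * X ω)) μ) :
    ∫ ω, exp (t * |X ω - ∫ ω', X ω' ∂μ|) ∂μ ≤ 2 * (mgf X μ t * mgf X μ (-t)) := by
  rcases eq_or_ne t 0 with rfl | ht
  · norm_num
  have hX : Integrable X μ := by simpa using integrable_pow_of_integrable_exp_mul ht hpos hneg 1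
  set m := ∫ ω, X ω ∂μ
  have hcenter (u : ℝ) : ∫ ω, exp (u * (X ω - m)) ∂μ = mgf X μ u * exp (u * -m) := by
    simp_rw [sub_eq_add_neg]
    exact mgf_add_const (-m)
  have hint (u : ℝ) (hu : Integrable (fun ω ↦ exp (u * X ω)) μ) :
      Integrable (fun ω ↦ exp (u * (X ω - m))) μ := by
    simpa [mul_sub, exp_sub] using hu.div_const (exp (u * m))
  calc ∫ ω, exp (t * |X ω - m|) ∂μ
      ≤ ∫ ω, (exp (t * (X ω - m)) + exp (-t * (X ω - m))) ∂μ := by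
        refine integral_mono_of_nonneg (.of_forall fun _ ↦ (exp_pos _).le)
          ((hint t hpos).add (hint (-t) hneg)) (.of_forall fun ω ↦ ?_)
        calc exp (t * |X ω - m|) ≤ exp |t * (X ω - m)| := by
              rw [abs_mul]; gcongr; exact le_abs_self t
          _ ≤ exp (t * (X ω - m)) + exp (-t * (X ω - m)) := by rw [neg_mul]; exact exp_abs_le _
    _ = mgf X μ t * exp (t * -m) + mgf X μ (-t) * exp (-t * -m) := by
        rw [integral_add (hint t hpos) (hint (-t) hneg), hcenter, hcenter]
    _ ≤ mgf X μ t * mgf X μ (-t) + mgf X μ (-t) * mgf X μ t := by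
        gcongr
        · exact mgf_nonneg
        · rw [mul_neg, ← neg_mul]; exact exp_mul_integral_le_mgf hX hneg
        · exact mgf_nonneg
        · rw [neg_mul_neg]; exact exp_mul_integral_le_mgf hX hpos
    _ = 2 * (mgf X μ t * mgf X μ (-t)) := by ring

theorem integrable_exp_mul_of_lintegral_ne_top (hX : AEMeasurable X μ)
    (h : ∫⁻ ω, ENNReal.ofReal (exp (t * X ω)) ∂μ ≠ ⊤) :
    Integrable (fun ω ↦ exp (t * X ω)) μ :=
  ⟨by fun_prop, (hasFiniteIntegral_iff_ofReal (.of_forall fun _ ↦ (exp_pos _).le)).2 h.lt_top⟩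

theorem lintegral_exp_ne_zero [NeZero μ] {f : Ω → ℝ} (hf : AEMeasurable f μ) :
    ∫⁻ ω, ENNReal.ofReal (exp (f ω)) ∂μ ≠ 0 := by
  rw [Ne, lintegral_eq_zero_iff' (by fun_prop)]
  intro h
  obtain ⟨ω, hω⟩ := h.exists
  simp only [Pi.zero_apply, ENNReal.ofReal_eq_zero] at hω
  exact (exp_pos _).not_ge hω

theorem mgf_mul_mgf_neg_le_of_lintegral [NeZero μ] {C : ℝ} (hC : 0 ≤ C) (hX : AEMeasurable X μ)
    (h : (∫⁻ ω, ENNReal.ofReal (exp (t * X ω)) ∂μ) * ∫⁻ ω, ENNReal.ofReal (exp (-t * X ω)) ∂μ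
      ≤ ENNReal.ofReal C) :
    Integrable (fun ω ↦ exp (t * X ω)) μ ∧ Integrable (fun ω ↦ exp (-t * X ω)) μ ∧
      mgf X μ t * mgf X μ (-t) ≤ C := by
  have hfin := (h.trans_lt ENNReal.ofReal_lt_top).ne
  have hpos := integrable_exp_mul_of_lintegral_ne_top hX
    (ENNReal.lt_top_of_mul_ne_top_left hfin (lintegral_exp_ne_zero (by fun_prop))).ne
  have hneg := integrable_exp_mul_of_lintegral_ne_top hX
    (ENNReal.lt_top_of_mul_ne_top_right hfin (lintegral_exp_ne_zero (by fun_prop))).ne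
  refine ⟨hpos, hneg, ?_⟩
  have hexp₀ (u : ℝ) : 0 ≤ᵐ[μ] fun ω ↦ exp (u * X ω) := .of_forall fun _ ↦ (exp_pos _).le
  rw [mgf, mgf, integral_eq_lintegral_of_nonneg_ae (hexp₀ t) (by fun_prop),
    integral_eq_lintegral_of_nonneg_ae (hexp₀ (-t)) (by fun_prop), ← ENNReal.toReal_mul]
  exact ENNReal.toReal_le_of_le_ofReal hC h

end Probability

theorem order_p_log_mgf_abs_bound_general
    {Ω : Type*} [MeasureSpace Ω] [IsProbabilityMeasure (ℙ : Measure Ω)]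
    (ξ : Ω → ℝ) (hξm : Measurable ξ)
    (p : ℝ) (hp : 1 < p)
    (g : ℝ → ℝ) (hgnn : ∀ x, 0 < x → 0 ≤ g x) (hgm : Measurable g)
    (hdens : Measure.map ξ ℙ = volume.withDensity
      (fun x => ENNReal.ofReal (if 0 < x then x ^ (p - 1) * g x else 0)))
    (hlc : ∀ x y : ℝ, 0 < x → 0 < y → ∀ l : ℝ, 0 ≤ l → l ≤ 1 →
      g x ^ l * g y ^ (1 - l) ≤ g (l * x + (1 - l) * y))
    (α : ℝ) (hα0 : 0 ≤ α) (hα1 : α ≤ p - 1) :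
    (∫ ω, Real.exp (α * |Real.log (ξ ω) - ∫ ω', Real.log (ξ ω')|))
      ≤ 2 * Real.exp (2 * α ^ 2 / (p - 1)) := by
  have hs : 0 < p - 1 := sub_pos.mpr hp
  have hmoment := lintegral_exp_mul_log_eq_lintegral_powWeight hξm hgm hgnn hdens
  have hmass : ∫⁻ x, ENNReal.ofReal (powWeight (p - 1) g x) = 1 := by
    simpa using (hmoment 0).symm
  have hprod := lintegral_powWeight_mul_lintegral_powWeight_le hs (abs_le.mpr ⟨by linarith, hα1⟩)
    hgm hgnn fun x y hx hy ↦ mul_le_sq_midpoint_of_rpow_mul_rpow_le hgnn hlc hx hy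
  rw [hmass, one_pow, mul_one, ← hmoment, show p - 1 - α = p - 1 + -α by ring, ← hmoment] at hprod
  obtain ⟨hpos, hneg, hmgf⟩ := mgf_mul_mgf_neg_le_of_lintegral (X := fun ω ↦ log (ξ ω))
    (exp_pos _).le (by fun_prop) hprod
  calc _ ≤ 2 * (mgf (fun ω ↦ log (ξ ω)) ℙ α * mgf (fun ω ↦ log (ξ ω)) ℙ (-α)) :=
        integral_exp_mul_abs_sub_integral_le hpos hneg
    _ ≤ 2 * exp (2 * α ^ 2 / (p - 1)) := by gcongr

theorem order_p_log_mgf_abs_bound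
    {Ω : Type*} [MeasureSpace Ω] [IsProbabilityMeasure (ℙ : Measure Ω)]
    (ξ : Ω → ℝ) (hξm : Measurable ξ) (hξpos : ∀ ω, 0 < ξ ω)
    (p : ℝ) (hp : 1 < p)
    (g : ℝ → ℝ) (hgnn : ∀ x, 0 < x → 0 ≤ g x) (hgm : Measurable g)
    (hdens : Measure.map ξ ℙ = volume.withDensity
      (fun x => ENNReal.ofReal (if 0 < x then x ^ (p - 1) * g x else 0)))
    (hlc : ∀ x y : ℝ, 0 < x → 0 < y → ∀ l : ℝ, 0 ≤ l → l ≤ 1 →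
      g x ^ l * g y ^ (1 - l) ≤ g (l * x + (1 - l) * y))
    (α : ℝ) (hα0 : 0 ≤ α) (hα1 : α ≤ p - 1) :
    (∫ ω, Real.exp (α * |Real.log (ξ ω) - ∫ ω', Real.log (ξ ω')|))
      ≤ 2 * Real.exp (2 * α ^ 2 / (p - 1)) :=
  order_p_log_mgf_abs_bound_general ξ hξm p hp g hgnn hgm hdens hlc α hα0 hα1
end
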